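/- arXiv:1302.0213 — 9 statements merged into one kernel-verified Lean document; each statement's English description precedes it below -/
import Mathlib

section
/- Let G be a group and K a normal subgroup of G. Then G/K is isoclinic to G/(K ∩ [G,G]). -/
/-!
Let `N = K ∩ [G, G]`. The natural surjection `φ : G/N → G/K` has kernel `K/N`, which meets
`[G/N, G/N] = [G, G]N/N` trivially because `K ∩ [G, G]N = (K ∩ [G, G])N = N`. A surjection whose
kernel meets the derived subgroup trivially is an isoclinism: it is injective on the derived
subgroup, and since `[x, y]` lies in the kernel only when it is trivial, `φ x` is central exactly
when `x` is, so `φ` also induces an isomorphism of central quotients. Compatibility with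
commutators holds because a commutator only depends on the classes of its entries modulo the
centre.
-/

open scoped commutatorElement

theorem mem_commutator_of {G : Type} [Group G] (g₁ g₂ : G) : ⁅g₁, g₂⁆ ∈ commutator G := by
  rw [commutator_def]
  exact Subgroup.commutator_mem_commutator (Subgroup.mem_top _) (Subgroup.mem_top _)

/-- Two groups are isoclinic. -/
def IsIsoclinic (G H : Type) [Group G] [Group H] : Prop :=
  ∃ (ζ : (G ⧸ Subgroup.center G) ≃* (H ⧸ Subgroup.center H))
    (η : (commutator G) ≃* (commutator H)),
    ∀ (g₁ g₂ : G) (h₁ h₂ : H),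
      ζ ((g₁ : G) : G ⧸ Subgroup.center G) = ((h₁ : H) : H ⧸ Subgroup.center H) →
      ζ ((g₂ : G) : G ⧸ Subgroup.center G) = ((h₂ : H) : H ⧸ Subgroup.center H) →
      η ⟨⁅g₁, g₂⁆, mem_commutator_of g₁ g₂⟩ = ⟨⁅h₁, h₂⁆, mem_commutator_of h₁ h₂⟩

theorem commutatorElement_eq_of_mk_center_eq {G : Type*} [Group G] {a b c d : G}
    (hab : (a : G ⧸ Subgroup.center G) = b) (hcd : (c : G ⧸ Subgroup.center G) = d) :
    ⁅a, c⁆ = ⁅b, d⁆ := by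
  obtain ⟨z, hz, rfl⟩ : ∃ z ∈ Subgroup.center G, b = a * z :=
    ⟨a⁻¹ * b, QuotientGroup.eq.mp hab, by group⟩
  obtain ⟨w, hw, rfl⟩ : ∃ w ∈ Subgroup.center G, d = c * w :=
    ⟨c⁻¹ * d, QuotientGroup.eq.mp hcd, by group⟩
  have hzc : ⁅z, c⁆ = 1 :=
    commutatorElement_eq_one_iff_mul_comm.mpr (Subgroup.mem_center_iff.mp hz c).symm
  have hazw : ⁅a * z, w⁆ = 1 :=
    commutatorElement_eq_one_iff_mul_comm.mpr (Subgroup.mem_center_iff.mp hw _)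
  rw [commutatorElement_mul_right_eq_mul_conj, commutatorElement_mul_left_eq_conj_mul, hzc, hazw]
  group

theorem IsIsoclinic.symm {G H : Type} [Group G] [Group H] (h : IsIsoclinic G H) :
    IsIsoclinic H G := by
  obtain ⟨ζ, η, hζη⟩ := h
  refine ⟨ζ.symm, η.symm, fun h₁ h₂ g₁ g₂ e₁ e₂ => ?_⟩
  rw [MulEquiv.symm_apply_eq] at e₁ e₂ ⊢
  exact (hζη g₁ g₂ h₁ h₂ e₁.symm e₂.symm).symm

section SurjectiveHom

variable {H G : Type*} [Group H] [Group G] {φ : H →* G}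

theorem map_commutator_of_surjective (hφ : Function.Surjective φ) :
    (commutator H).map φ = commutator G := by
  rw [map_commutator_eq, φ.range_eq_top.mpr hφ, commutator_def]

theorem map_eq_one_iff_of_mem_commutator (hker : Disjoint φ.ker (commutator H)) {x : H}
    (hx : x ∈ commutator H) : φ x = 1 ↔ x = 1 :=
  ⟨fun h => Subgroup.disjoint_def.mp hker h hx, fun h => h ▸ map_one φ⟩

theorem comap_center_of_disjoint_ker_commutator (hφ : Function.Surjective φ)
    (hker : Disjoint φ.ker (commutator H)) :
    (Subgroup.center G).comap φ = Subgroup.center H := by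
  ext x
  simp only [Subgroup.mem_comap, Subgroup.mem_center_iff, hφ.forall]
  refine forall_congr' fun y => ?_
  rw [← commutatorElement_eq_one_iff_mul_comm, ← commutatorElement_eq_one_iff_mul_comm,
    ← map_commutatorElement, map_eq_one_iff_of_mem_commutator hker
      (Subgroup.commutator_mem_commutator (Subgroup.mem_top y) (Subgroup.mem_top x))]

noncomputable def centralQuotientEquivOfSurjective (hφ : Function.Surjective φ)
    (hker : Disjoint φ.ker (commutator H)) :
    H ⧸ Subgroup.center H ≃* G ⧸ Subgroup.center G :=
  (QuotientGroup.quotientMulEquivOfEq (by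
      rw [← MonoidHom.comap_ker, QuotientGroup.ker_mk',
        comap_center_of_disjoint_ker_commutator hφ hker])).trans
    (QuotientGroup.quotientKerEquivOfSurjective ((QuotientGroup.mk' _).comp φ)
      ((QuotientGroup.mk'_surjective _).comp hφ))

theorem centralQuotientEquivOfSurjective_mk (hφ : Function.Surjective φ)
    (hker : Disjoint φ.ker (commutator H)) (x : H) :
    centralQuotientEquivOfSurjective hφ hker x = (φ x : G ⧸ Subgroup.center G) :=
  rfl

noncomputable def commutatorEquivOfSurjective (hφ : Function.Surjective φ)
    (hker : Disjoint φ.ker (commutator H)) : commutator H ≃* commutator G :=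
  (MulEquiv.ofBijective (φ.subgroupMap (commutator H))
      ⟨(injective_iff_map_eq_one _).mpr fun x hx =>
          Subtype.ext ((map_eq_one_iff_of_mem_commutator hker x.2).mp (congrArg Subtype.val hx)),
        φ.subgroupMap_surjective _⟩).trans
    (MulEquiv.subgroupCongr (map_commutator_of_surjective hφ))

theorem coe_commutatorEquivOfSurjective_apply (hφ : Function.Surjective φ)
    (hker : Disjoint φ.ker (commutator H)) (x : commutator H) :
    (commutatorEquivOfSurjective hφ hker x : G) = φ x :=
  rfl

end SurjectiveHom

theorem isIsoclinic_of_surjective {H G : Type} [Group H] [Group G] {φ : H →* G}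
    (hφ : Function.Surjective φ) (hker : Disjoint φ.ker (commutator H)) : IsIsoclinic H G := by
  refine ⟨centralQuotientEquivOfSurjective hφ hker, commutatorEquivOfSurjective hφ hker,
    fun h₁ h₂ g₁ g₂ e₁ e₂ => Subtype.ext ?_⟩
  rw [centralQuotientEquivOfSurjective_mk] at e₁ e₂
  rw [coe_commutatorEquivOfSurjective_apply, map_commutatorElement]
  exact commutatorElement_eq_of_mk_center_eq e₁ e₂

theorem disjoint_ker_quotientMap_commutator {G : Type*} [Group G] {N K : Subgroup G} [N.Normal]
    [K.Normal] (hNK : N ≤ K) (hKN : K ⊓ commutator G ≤ N) :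
    Disjoint (QuotientGroup.map N K (MonoidHom.id G) hNK).ker (commutator (G ⧸ N)) := by
  rw [Subgroup.disjoint_def]
  intro x hx hxC
  induction x using QuotientGroup.induction_on with | H x => ?_
  rw [← map_commutator_of_surjective (QuotientGroup.mk'_surjective N)] at hxC
  obtain ⟨c, hc, hcx⟩ := hxC
  have hcx : c⁻¹ * x ∈ N := QuotientGroup.eq.mp hcx
  have hxK : x ∈ K := (QuotientGroup.eq_one_iff x).mp hx
  have hcK : c ∈ K := by simpa using K.mul_mem hxK (K.inv_mem (hNK hcx))
  have hcN : c ∈ N := hKN ⟨hcK, hc⟩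
  exact (QuotientGroup.eq_one_iff x).mpr (by simpa using N.mul_mem hcN hcx)

theorem isIsoclinic_quotient_of_le {G : Type} [Group G] {N K : Subgroup G} [N.Normal] [K.Normal]
    (hNK : N ≤ K) (hKN : K ⊓ commutator G ≤ N) : IsIsoclinic (G ⧸ N) (G ⧸ K) :=
  isIsoclinic_of_surjective
    (QuotientGroup.map_surjective_of_surjective N K (MonoidHom.id G) QuotientGroup.mk_surjective
      hNK)
    (disjoint_ker_quotientMap_commutator hNK hKN)

theorem stmt0 (G : Type) [Group G] (K : Subgroup G) [K.Normal] :
    IsIsoclinic (G ⧸ K) (G ⧸ (K ⊓ commutator G)) :=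
  (isIsoclinic_quotient_of_le inf_le_left le_rfl).symm
end

section
/- Let G and H be groups and let K be a normal subgroup of G with K ⊆ [G,G]. Suppose G is isoclinic to H via isomorphisms ζ : G/Z(G) → H/Z(H) and η : [G,G] → [H,H]. Then η(K) is a normal subgroup of H and G/K is isoclinic to H/η(K). -/
/-! Call `g ∈ G` and `h ∈ H` matched when `ζ (g Z(G)) = h Z(H)`; then `η [g, x] = [h, y]` for
matched pairs. Hence `ζ` and `η` agree on `[G,G]` modulo the centres, `η (g c g⁻¹) = h η(c) h⁻¹`,
and `L = η(K ∩ [G,G])` is normal. As `gK` is central in `G/K` iff every `[g, x]` lies in `K`,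
matched elements are central modulo `K` and modulo `L` simultaneously, so `g ↦ h L` induces
`(G/K)/Z(G/K) ≃ (H/L)/Z(H/L)`, while `η` descends to
`[G/K, G/K] ≅ [G,G]/(K ∩ [G,G]) ≃ [H,H]/L ≅ [H/L, H/L]`. Commutators do not see central factors,
so these two isomorphisms form an isoclinism. -/

open scoped commutatorElement

section GroupLemmas

variable {M M' : Type*} [Group M] [Group M']

lemma commutatorElement_eq_of_mk_center_eq_s1 {a b a' b' : M}
    (ha : (a : M ⧸ Subgroup.center M) = a') (hb : (b : M ⧸ Subgroup.center M) = b') :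
    ⁅a, b⁆ = ⁅a', b'⁆ := by
  obtain ⟨z, hz, rfl⟩ : ∃ z ∈ Subgroup.center M, a' = a * z :=
    ⟨a⁻¹ * a', QuotientGroup.eq.mp ha, by group⟩
  obtain ⟨w, hw, rfl⟩ : ∃ w ∈ Subgroup.center M, b' = b * w :=
    ⟨b⁻¹ * b', QuotientGroup.eq.mp hb, by group⟩
  have hz' := Subgroup.mem_center_iff.mp hz
  have hw' := Subgroup.mem_center_iff.mp hw
  symm
  calc ⁅a * z, b * w⁆ = a * (z * (b * w) * z⁻¹) * a⁻¹ * (b * w)⁻¹ := by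
        rw [commutatorElement_def]; group
    _ = a * (b * (w * a⁻¹ * w⁻¹)) * b⁻¹ := by rw [← hz' (b * w)]; group
    _ = ⁅a, b⁆ := by rw [← hw' a⁻¹, commutatorElement_def]; group

lemma QuotientGroup.mk_mem_center_iff (N : Subgroup M) [N.Normal] (g : M) :
    (g : M ⧸ N) ∈ Subgroup.center (M ⧸ N) ↔ ∀ x, ⁅g, x⁆ ∈ N := by
  rw [← Subgroup.mem_upperCentralSeriesStep, Subgroup.upperCentralSeriesStep_eq_comap_center]
  rfl

lemma center_le_comap_center {f : M →* M'} (hf : Function.Surjective f) :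
    Subgroup.center M ≤ (Subgroup.center M').comap f := by
  intro z hz
  rw [Subgroup.mem_comap, Subgroup.mem_center_iff]
  intro y
  obtain ⟨x, rfl⟩ := hf y
  rw [← map_mul, ← map_mul, Subgroup.mem_center_iff.mp hz x]

lemma map_mem_commutator (f : M →* M') {c : M} (hc : c ∈ commutator M) :
    f c ∈ commutator M' := by
  have hfc := Subgroup.mem_map_of_mem f hc
  rw [commutator_def, Subgroup.map_commutator] at hfc
  rw [commutator_def]
  exact Subgroup.commutator_mono le_top le_top hfc

lemma commutator_eq_map_commutator {f : M →* M'} (hf : Function.Surjective f) :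
    commutator M' = (commutator M).map f := by
  rw [commutator_def, commutator_def, Subgroup.map_commutator, Subgroup.map_top_of_surjective f hf]

def MonoidHom.commutatorRestrict (f : M →* M') : commutator M →* commutator M' :=
  (f.domRestrict (commutator M)).codRestrict (commutator M') fun c => map_mem_commutator f c.2

lemma MonoidHom.commutatorRestrict_surjective {f : M →* M'} (hf : Function.Surjective f) :
    Function.Surjective f.commutatorRestrict := by
  rintro ⟨q, hq⟩
  rw [commutator_eq_map_commutator hf] at hq
  obtain ⟨c, hc, rfl⟩ := hq
  exact ⟨⟨c, hc⟩, rfl⟩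

lemma MonoidHom.ker_commutatorRestrict (f : M →* M') :
    f.commutatorRestrict.ker = f.ker.subgroupOf (commutator M) := by
  ext c
  rw [MonoidHom.mem_ker, Subgroup.mem_subgroupOf, MonoidHom.mem_ker, ← OneMemClass.coe_eq_one]
  rfl

noncomputable def MulEquiv.ofSurjectiveOfKerEq {A B C : Type*} [Group A] [Group B] [Group C]
    {f : A →* B} {g : A →* C} (hf : Function.Surjective f) (hg : Function.Surjective g)
    (h : f.ker = g.ker) : B ≃* C :=
  (QuotientGroup.quotientKerEquivOfSurjective f hf).symm.trans
    ((QuotientGroup.quotientMulEquivOfEq h).trans (QuotientGroup.quotientKerEquivOfSurjective g hg))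

lemma MulEquiv.ofSurjectiveOfKerEq_apply {A B C : Type*} [Group A] [Group B] [Group C]
    {f : A →* B} {g : A →* C} (hf : Function.Surjective f) (hg : Function.Surjective g)
    (h : f.ker = g.ker) (a : A) : ofSurjectiveOfKerEq hf hg h (f a) = g a := by
  have hfa : (QuotientGroup.quotientKerEquivOfSurjective f hf).symm (f a) = (a : A ⧸ f.ker) :=
    (MulEquiv.symm_apply_eq _).mpr rfl
  rw [ofSurjectiveOfKerEq, MulEquiv.trans_apply, MulEquiv.trans_apply, hfa]
  rfl

lemma MulEquiv.exists_apply_mk_eq_mk {N : Subgroup M} {N' : Subgroup M'} [N.Normal] [N'.Normal]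
    (e : M ⧸ N ≃* M' ⧸ N') (g : M) : ∃ h : M', e g = h := by
  obtain ⟨h, hh⟩ := QuotientGroup.mk_surjective (e g)
  exact ⟨h, hh.symm⟩

lemma MulEquiv.exists_apply_mk_eq_mk_of_right {N : Subgroup M} {N' : Subgroup M'}
    [N.Normal] [N'.Normal] (e : M ⧸ N ≃* M' ⧸ N') (h : M') : ∃ g : M, e g = h := by
  obtain ⟨g, hg⟩ := QuotientGroup.mk_surjective (e.symm h)
  exact ⟨g, by rw [hg, MulEquiv.apply_symm_apply]⟩

end GroupLemmas

section Isoclinism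

variable {G H : Type} [Group G] [Group H]

def IsIsoclinism (ζ : G ⧸ Subgroup.center G ≃* H ⧸ Subgroup.center H)
    (η : commutator G ≃* commutator H) : Prop :=
  ∀ (g₁ g₂ : G) (h₁ h₂ : H),
    ζ (g₁ : G ⧸ Subgroup.center G) = (h₁ : H ⧸ Subgroup.center H) →
    ζ (g₂ : G ⧸ Subgroup.center G) = (h₂ : H ⧸ Subgroup.center H) →
    η ⟨⁅g₁, g₂⁆, mem_commutator_of g₁ g₂⟩ = ⟨⁅h₁, h₂⁆, mem_commutator_of h₁ h₂⟩

variable {ζ : G ⧸ Subgroup.center G ≃* H ⧸ Subgroup.center H} {η : commutator G ≃* commutator H}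

-- `η(K ∩ [G,G])`; reducible so that instances stated for the unfolded subgroup apply.
abbrev commutatorImage (η : commutator G ≃* commutator H) (K : Subgroup G) : Subgroup H :=
  ((K.subgroupOf (commutator G)).map η.toMonoidHom).map (commutator H).subtype

lemma coe_apply_mem_commutatorImage_iff {K : Subgroup G} (c : commutator G) :
    (η c : H) ∈ commutatorImage η K ↔ (c : G) ∈ K := by
  rw [commutatorImage, ← Subgroup.coe_subtype,
    Subgroup.mem_map_iff_mem (commutator H).subtype_injective, Subgroup.mem_map_equiv,
    MulEquiv.symm_apply_apply, Subgroup.mem_subgroupOf]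

namespace IsIsoclinism

variable (hζη : IsIsoclinism ζ η)
include hζη

lemma apply_mk_eq_mk (c : commutator G) :
    ζ ((c : G) : G ⧸ Subgroup.center G) = ((η c : H) : H ⧸ Subgroup.center H) := by
  let φ : commutator G →* H ⧸ Subgroup.center H :=
    ζ.toMonoidHom.comp ((QuotientGroup.mk' _).comp (commutator G).subtype)
  let ψ : commutator G →* H ⧸ Subgroup.center H :=
    (QuotientGroup.mk' _).comp ((commutator H).subtype.comp η.toMonoidHom)
  have hgen : commutator G ≤ (φ.eqLocus ψ).map (commutator G).subtype := by
    refine (commutator_eq_closure G).le.trans ((Subgroup.closure_le _).mpr ?_)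
    rintro _ ⟨a, b, rfl⟩
    refine ⟨⟨⁅a, b⁆, mem_commutator_of a b⟩, ?_, rfl⟩
    obtain ⟨a', ha⟩ := ζ.exists_apply_mk_eq_mk a
    obtain ⟨b', hb⟩ := ζ.exists_apply_mk_eq_mk b
    show ζ (QuotientGroup.mk' _ ⁅a, b⁆) = QuotientGroup.mk' _ (η ⟨⁅a, b⁆, _⟩ : H)
    rw [hζη a b a' b' ha hb, map_commutatorElement, map_commutatorElement, map_commutatorElement]
    exact congrArg₂ _ ha hb
  obtain ⟨c', hc', hc'c⟩ := hgen c.2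
  rwa [Subtype.ext hc'c] at hc'

lemma map_conjNormal {g : G} {h : H}
    (hgh : ζ (g : G ⧸ Subgroup.center G) = (h : H ⧸ Subgroup.center H)) (c : commutator G) :
    η (MulAut.conjNormal g c) = MulAut.conjNormal h (η c) := by
  have hconj : MulAut.conjNormal g c = ⟨⁅g, c⁆, mem_commutator_of g c⟩ * c := by
    ext
    simp only [MulAut.conjNormal_apply, Subgroup.coe_mul, commutatorElement_def]
    group
  rw [hconj, map_mul, hζη g c h (η c) hgh (hζη.apply_mk_eq_mk c)]
  ext
  simp only [MulAut.conjNormal_apply, Subgroup.coe_mul, commutatorElement_def]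
  group

variable {K : Subgroup G}

lemma commutatorElement_mem_iff {g x : G} {h y : H}
    (hgh : ζ (g : G ⧸ Subgroup.center G) = (h : H ⧸ Subgroup.center H))
    (hxy : ζ (x : G ⧸ Subgroup.center G) = (y : H ⧸ Subgroup.center H)) :
    ⁅g, x⁆ ∈ K ↔ ⁅h, y⁆ ∈ commutatorImage η K := by
  rw [show ⁅h, y⁆ = (η ⟨⁅g, x⁆, mem_commutator_of g x⟩ : H) by rw [hζη g x h y hgh hxy],
    coe_apply_mem_commutatorImage_iff]

lemma commutatorImage_normal [K.Normal] : (commutatorImage η K).Normal := by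
  constructor
  rintro _ ⟨_, ⟨c, hc, rfl⟩, rfl⟩ h
  obtain ⟨g, hgh⟩ := ζ.exists_apply_mk_eq_mk_of_right h
  have hconj := congrArg Subtype.val (hζη.map_conjNormal hgh c)
  rw [MulAut.conjNormal_apply] at hconj
  change h * (η c : H) * h⁻¹ ∈ _
  rw [← hconj, coe_apply_mem_commutatorImage_iff, MulAut.conjNormal_apply]
  exact ‹K.Normal›.conj_mem _ hc g

lemma mk_mem_center_iff_mk_mem_center [K.Normal] [(commutatorImage η K).Normal] {g : G} {h : H}
    (hgh : ζ (g : G ⧸ Subgroup.center G) = (h : H ⧸ Subgroup.center H)) :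
    (g : G ⧸ K) ∈ Subgroup.center (G ⧸ K) ↔
      (h : H ⧸ commutatorImage η K) ∈ Subgroup.center (H ⧸ commutatorImage η K) := by
  rw [QuotientGroup.mk_mem_center_iff, QuotientGroup.mk_mem_center_iff]
  constructor
  · intro hg y
    obtain ⟨x, hxy⟩ := ζ.exists_apply_mk_eq_mk_of_right y
    exact (hζη.commutatorElement_mem_iff hgh hxy).mp (hg x)
  · intro hh x
    obtain ⟨y, hxy⟩ := ζ.exists_apply_mk_eq_mk x
    exact (hζη.commutatorElement_mem_iff hgh hxy).mpr (hh y)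

end IsIsoclinism

end Isoclinism

section Quotient

variable {G H : Type} [Group G] [Group H]

def quotientCenterMap (ζ : G ⧸ Subgroup.center G ≃* H ⧸ Subgroup.center H) (N : Subgroup H)
    [N.Normal] : G →* (H ⧸ N) ⧸ Subgroup.center (H ⧸ N) :=
  (QuotientGroup.map _ _ (QuotientGroup.mk' N)
      (center_le_comap_center (QuotientGroup.mk'_surjective N))).comp
    (ζ.toMonoidHom.comp (QuotientGroup.mk' _))

variable {ζ : G ⧸ Subgroup.center G ≃* H ⧸ Subgroup.center H} {N : Subgroup H} [N.Normal]

lemma quotientCenterMap_apply {g : G} {h : H}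
    (hgh : ζ (g : G ⧸ Subgroup.center G) = (h : H ⧸ Subgroup.center H)) :
    quotientCenterMap ζ N g = ((h : H ⧸ N) : (H ⧸ N) ⧸ Subgroup.center (H ⧸ N)) := by
  simp only [quotientCenterMap, MonoidHom.comp_apply, QuotientGroup.mk'_apply,
    MulEquiv.coe_toMonoidHom, hgh, QuotientGroup.map_mk]

lemma quotientCenterMap_surjective : Function.Surjective (quotientCenterMap ζ N) := by
  intro q
  obtain ⟨h', rfl⟩ := QuotientGroup.mk_surjective q
  obtain ⟨h, rfl⟩ := QuotientGroup.mk_surjective h'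
  obtain ⟨g, hgh⟩ := ζ.exists_apply_mk_eq_mk_of_right h
  exact ⟨g, quotientCenterMap_apply hgh⟩

def quotientCommutatorMap (η : commutator G ≃* commutator H) (N : Subgroup H) [N.Normal] :
    commutator G →* commutator (H ⧸ N) :=
  (QuotientGroup.mk' N).commutatorRestrict.comp η.toMonoidHom

lemma quotientCommutatorMap_surjective (η : commutator G ≃* commutator H) :
    Function.Surjective (quotientCommutatorMap η N) :=
  ((QuotientGroup.mk' N).commutatorRestrict_surjective (QuotientGroup.mk'_surjective N)).comp
    η.surjective

lemma ker_quotientCommutatorMap (η : commutator G ≃* commutator H) (K : Subgroup G)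
    [(commutatorImage η K).Normal] :
    (quotientCommutatorMap η (commutatorImage η K)).ker = K.subgroupOf (commutator G) := by
  ext c
  rw [MonoidHom.mem_ker, Subgroup.mem_subgroupOf, ← coe_apply_mem_commutatorImage_iff (η := η),
    ← QuotientGroup.eq_one_iff, ← OneMemClass.coe_eq_one]
  rfl

noncomputable def quotientCommutatorEquiv (η : commutator G ≃* commutator H) (K : Subgroup G)
    [K.Normal] [(commutatorImage η K).Normal] :
    commutator (G ⧸ K) ≃* commutator (H ⧸ commutatorImage η K) :=
  MulEquiv.ofSurjectiveOfKerEq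
    ((QuotientGroup.mk' K).commutatorRestrict_surjective (QuotientGroup.mk'_surjective K))
    (quotientCommutatorMap_surjective η)
    (by rw [MonoidHom.ker_commutatorRestrict, QuotientGroup.ker_mk', ker_quotientCommutatorMap])

lemma quotientCommutatorEquiv_commutatorRestrict (η : commutator G ≃* commutator H)
    (K : Subgroup G) [K.Normal] [(commutatorImage η K).Normal] (c : commutator G) :
    quotientCommutatorEquiv η K ((QuotientGroup.mk' K).commutatorRestrict c) =
      quotientCommutatorMap η _ c :=
  MulEquiv.ofSurjectiveOfKerEq_apply _ _ _ c

end Quotient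

namespace IsIsoclinism

variable {G H : Type} [Group G] [Group H]
  {ζ : G ⧸ Subgroup.center G ≃* H ⧸ Subgroup.center H} {η : commutator G ≃* commutator H}
  (hζη : IsIsoclinism ζ η) (K : Subgroup G) [K.Normal] [(commutatorImage η K).Normal]
include hζη

lemma ker_quotientCenterMap :
    (quotientCenterMap ζ (commutatorImage η K)).ker =
      ((QuotientGroup.mk' (Subgroup.center (G ⧸ K))).comp (QuotientGroup.mk' K)).ker := by
  ext g
  obtain ⟨h, hgh⟩ := ζ.exists_apply_mk_eq_mk g
  rw [MonoidHom.mem_ker, MonoidHom.mem_ker, quotientCenterMap_apply hgh, MonoidHom.comp_apply,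
    QuotientGroup.mk'_apply, QuotientGroup.mk'_apply, QuotientGroup.eq_one_iff,
    QuotientGroup.eq_one_iff, hζη.mk_mem_center_iff_mk_mem_center hgh]

noncomputable def quotientCenterEquiv :
    (G ⧸ K) ⧸ Subgroup.center (G ⧸ K) ≃*
      (H ⧸ commutatorImage η K) ⧸ Subgroup.center (H ⧸ commutatorImage η K) :=
  MulEquiv.ofSurjectiveOfKerEq
    (show Function.Surjective ((QuotientGroup.mk' _).comp (QuotientGroup.mk' K)) from
      (QuotientGroup.mk'_surjective _).comp (QuotientGroup.mk'_surjective K))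
    quotientCenterMap_surjective (hζη.ker_quotientCenterMap K).symm

lemma quotientCenterEquiv_mk_mk {g : G} {h : H}
    (hgh : ζ (g : G ⧸ Subgroup.center G) = (h : H ⧸ Subgroup.center H)) :
    hζη.quotientCenterEquiv K ((g : G ⧸ K) : (G ⧸ K) ⧸ Subgroup.center (G ⧸ K)) =
      ((h : H ⧸ commutatorImage η K) : (H ⧸ commutatorImage η K) ⧸ Subgroup.center _) :=
  (MulEquiv.ofSurjectiveOfKerEq_apply _ _ _ g).trans (quotientCenterMap_apply hgh)

theorem quotient : IsIsoclinism (hζη.quotientCenterEquiv K) (quotientCommutatorEquiv η K) := by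
  intro q₁ q₂ r₁ r₂ hq₁ hq₂
  obtain ⟨g₁, rfl⟩ := QuotientGroup.mk_surjective q₁
  obtain ⟨g₂, rfl⟩ := QuotientGroup.mk_surjective q₂
  obtain ⟨h₁, hgh₁⟩ := ζ.exists_apply_mk_eq_mk g₁
  obtain ⟨h₂, hgh₂⟩ := ζ.exists_apply_mk_eq_mk g₂
  have hr₁ := (hζη.quotientCenterEquiv_mk_mk K hgh₁).symm.trans hq₁
  have hr₂ := (hζη.quotientCenterEquiv_mk_mk K hgh₂).symm.trans hq₂
  have hlift : (⟨⁅(g₁ : G ⧸ K), (g₂ : G ⧸ K)⁆, mem_commutator_of _ _⟩ : commutator (G ⧸ K)) =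
      (QuotientGroup.mk' K).commutatorRestrict ⟨⁅g₁, g₂⁆, mem_commutator_of g₁ g₂⟩ := rfl
  rw [hlift, quotientCommutatorEquiv_commutatorRestrict, quotientCommutatorMap,
    MonoidHom.comp_apply, MulEquiv.coe_toMonoidHom, hζη g₁ g₂ h₁ h₂ hgh₁ hgh₂]
  ext
  exact (map_commutatorElement (QuotientGroup.mk' _) h₁ h₂).trans
    (commutatorElement_eq_of_mk_center_eq_s1 hr₁ hr₂)

end IsIsoclinism

theorem stmt1_general (G H : Type) [Group G] [Group H] (K : Subgroup G) [K.Normal]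
    (ζ : (G ⧸ Subgroup.center G) ≃* (H ⧸ Subgroup.center H))
    (η : (commutator G) ≃* (commutator H))
    (hcompat : ∀ (g₁ g₂ : G) (h₁ h₂ : H),
      ζ ((g₁ : G) : G ⧸ Subgroup.center G) = ((h₁ : H) : H ⧸ Subgroup.center H) →
      ζ ((g₂ : G) : G ⧸ Subgroup.center G) = ((h₂ : H) : H ⧸ Subgroup.center H) →
      η ⟨⁅g₁, g₂⁆, mem_commutator_of g₁ g₂⟩ = ⟨⁅h₁, h₂⁆, mem_commutator_of h₁ h₂⟩) :
    (((K.subgroupOf (commutator G)).map η.toMonoidHom).map (commutator H).subtype).Normal ∧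
    ∀ [(((K.subgroupOf (commutator G)).map η.toMonoidHom).map (commutator H).subtype).Normal],
      IsIsoclinic (G ⧸ K)
        (H ⧸ ((K.subgroupOf (commutator G)).map η.toMonoidHom).map (commutator H).subtype) :=
  ⟨IsIsoclinism.commutatorImage_normal hcompat,
    fun {_} => ⟨_, _, IsIsoclinism.quotient hcompat K⟩⟩

theorem stmt1 (G H : Type) [Group G] [Group H] (K : Subgroup G) [K.Normal]
    (hK : K ≤ commutator G)
    (ζ : (G ⧸ Subgroup.center G) ≃* (H ⧸ Subgroup.center H))
    (η : (commutator G) ≃* (commutator H))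
    (hcompat : ∀ (g₁ g₂ : G) (h₁ h₂ : H),
      ζ ((g₁ : G) : G ⧸ Subgroup.center G) = ((h₁ : H) : H ⧸ Subgroup.center H) →
      ζ ((g₂ : G) : G ⧸ Subgroup.center G) = ((h₂ : H) : H ⧸ Subgroup.center H) →
      η ⟨⁅g₁, g₂⁆, mem_commutator_of g₁ g₂⟩ = ⟨⁅h₁, h₂⁆, mem_commutator_of h₁ h₂⟩) :
    (((K.subgroupOf (commutator G)).map η.toMonoidHom).map (commutator H).subtype).Normal ∧
    ∀ [(((K.subgroupOf (commutator G)).map η.toMonoidHom).map (commutator H).subtype).Normal],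
      IsIsoclinic (G ⧸ K)
        (H ⧸ ((K.subgroupOf (commutator G)).map η.toMonoidHom).map (commutator H).subtype) :=
  stmt1_general G H K ζ η hcompat
end

section
/- Let X be a finite quandle such that X = Y₁ ∪ Y₂, where Y₁ and Y₂ are two disjoint orbits of the inner group Inn(X). Assume that there exists a quandle isomorphism between the subquandles Y₁ and Y₂, and that Y₁ is commutative (i ▷ j = j for all i,j ∈ Y₁). Let n = |Y₁|. Then X is isomorphic as a quandle to the quandle on (ℤ/nℤ) × {1,2} with operation (i,a) ▷ (j,b) = (j,b) if a = b and (j+1,b) if a ≠ b; equivalently, to the quandle on {1,…,2n} whose translations are φᵢ = (n+1 n+2 ⋯ 2n) for 1 ≤ i ≤ n and φᵢ = (1 2 ⋯ n) for n+1 ≤ i ≤ 2n. -/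
open Quandles

/-- The inner group of a rack: the subgroup of permutations generated by the
translations `φᵢ = (i ◃ ·)`. -/
def quandleInn (X : Type) [Rack X] : Subgroup (Equiv.Perm X) :=
  Subgroup.closure (Set.range (fun i : X => Rack.act' i))

/-!
When the two orbits `A ∋ x` and `B ∋ y` are trivial subquandles, the translation by `a ◃ b`
agrees with the translation by `b` on each orbit. Hence the action of `c` on `A` only depends on
the orbit of `c`: points of `A` fix `A`, and every point of `B` acts on `A` as `σ = φ_y`. So
`Inn(X)` acts on `A` through `⟨σ⟩`, and `A` is a single `σ`-cycle, i.e. `A ≅ ℤ/|A|` with every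
point of `B` acting as `+1`. The same holds with `A` and `B` exchanged, and `|B| = |A|` by the
isomorphism `A ≅ B`, which also makes `B` trivial.
-/

open MulAction Subgroup
open scoped Pointwise

section Inn

variable {X : Type} [Rack X]

theorem act'_mem_quandleInn (a : X) : Rack.act' a ∈ quandleInn X :=
  subset_closure (Set.mem_range_self a)

theorem act_mem_orbit_quandleInn (a : X) {y z : X} (hz : z ∈ orbit (quandleInn X) y) :
    a ◃ z ∈ orbit (quandleInn X) y :=
  mem_orbit_of_mem_orbit (⟨Rack.act' a, act'_mem_quandleInn a⟩ : quandleInn X) hz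

theorem apply_eq_of_mem_orbit_quandleInn {β : Type*} (f : X → β)
    (hf : ∀ a c, f (a ◃ c) = f c) {c y : X} (hc : c ∈ orbit (quandleInn X) y) : f c = f y := by
  obtain ⟨⟨G, hG⟩, rfl⟩ := hc
  show f (G y) = f y
  induction hG using closure_induction generalizing y with
  | mem _ h => obtain ⟨a, rfl⟩ := h; exact hf a y
  | one => rfl
  | mul G H _ _ ihG ihH => exact ihG.trans ihH
  | inv G _ ihG => simpa using (ihG (y := G⁻¹ y)).symm

end Inn

theorem orbitZPowersEquiv_symm_add_one {α β : Type*} [Group α] [MulAction α β] (a : α) (b : β)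
    (k : ZMod (Function.minimalPeriod (a • ·) b)) :
    ((orbitZPowersEquiv a b).symm (k + 1) : β) = a • ((orbitZPowersEquiv a b).symm k : β) := by
  obtain ⟨k, rfl⟩ := ZMod.intCast_surjective k
  rw [← Int.cast_one, ← Int.cast_add, orbitZPowersEquiv_symm_apply',
    orbitZPowersEquiv_symm_apply']
  simp [add_comm k 1, zpow_one_add, mul_smul]

section TwoOrbits

variable {X : Type} [Rack X] {A B : Set X} {x y : X}

theorem act_act_apply_of_mem (hA : A = orbit (quandleInn X) x) (hcover : A ∪ B = Set.univ)
    (hAtriv : ∀ a ∈ A, ∀ b ∈ A, a ◃ b = b) (hBtriv : ∀ a ∈ B, ∀ b ∈ B, a ◃ b = b)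
    {z : X} (hz : z ∈ A) (a b : X) : (a ◃ b) ◃ z = b ◃ z := by
  have hmem : ∀ c w, w ∈ A → c ◃ w ∈ A := fun c w hw =>
    hA ▸ act_mem_orbit_quandleInn c (hA ▸ hw)
  have hcases : ∀ c, c ∈ A ∨ c ∈ B := fun c => (hcover ▸ Set.mem_univ c : c ∈ A ∪ B)
  rcases hcases a with ha | ha
  · have h := (Shelf.self_distrib (x := a) (y := b) (z := z)).symm
    rwa [hAtriv a ha z hz, hAtriv a ha _ (hmem b z hz)] at h
  rcases hcases b with hb | hb
  · rw [hAtriv _ (hmem a b hb) z hz, hAtriv b hb z hz]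
  · rw [hBtriv a ha b hb]

theorem act_eq_act_of_mem (hA : A = orbit (quandleInn X) x) (hB : B = orbit (quandleInn X) y)
    (hcover : A ∪ B = Set.univ)
    (hAtriv : ∀ a ∈ A, ∀ b ∈ A, a ◃ b = b) (hBtriv : ∀ a ∈ B, ∀ b ∈ B, a ◃ b = b)
    {b z : X} (hb : b ∈ B) (hz : z ∈ A) : b ◃ z = y ◃ z :=
  apply_eq_of_mem_orbit_quandleInn (· ◃ z) (act_act_apply_of_mem hA hcover hAtriv hBtriv hz)
    (hB ▸ hb)

theorem orbit_quandleInn_eq_orbit_zpowers (hA : A = orbit (quandleInn X) x)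
    (hB : B = orbit (quandleInn X) y) (hcover : A ∪ B = Set.univ)
    (hAtriv : ∀ a ∈ A, ∀ b ∈ A, a ◃ b = b) (hBtriv : ∀ a ∈ B, ∀ b ∈ B, a ◃ b = b) :
    A = orbit (zpowers (Rack.act' y)) x := by
  set S := orbit (zpowers (Rack.act' y)) x
  have hSA : S ⊆ A := by
    rintro _ ⟨⟨g, hg⟩, rfl⟩
    exact hA ▸ ⟨⟨g, zpowers_le.2 (act'_mem_quandleInn y) hg⟩, rfl⟩
  have hstab : quandleInn X ≤ stabilizer (Equiv.Perm X) S := by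
    refine (closure_le _).2 ?_
    rintro _ ⟨a, rfl⟩
    rw [SetLike.mem_coe, mem_stabilizer_iff]
    rcases (hcover ▸ Set.mem_univ a : a ∈ A ∪ B) with ha | ha
    · calc Rack.act' a • S = id '' S :=
            Set.image_congr fun z hz => hAtriv a ha z (hSA hz)
        _ = S := Set.image_id S
    · calc Rack.act' a • S = Rack.act' y • S :=
            Set.image_congr fun z hz => act_eq_act_of_mem hA hB hcover hAtriv hBtriv ha (hSA hz)
        _ = S := smul_orbit (⟨Rack.act' y, mem_zpowers _⟩ : zpowers (Rack.act' y)) x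
  refine subset_antisymm ?_ hSA
  rw [hA]
  rintro _ ⟨⟨G, hG⟩, rfl⟩
  rw [← mem_stabilizer_iff.1 (hstab hG)]
  exact Set.smul_mem_smul_set (mem_orbit_self x)

theorem exists_equiv_zmod_act_eq_add_one (hA : A = orbit (quandleInn X) x)
    (hB : B = orbit (quandleInn X) y) (hcover : A ∪ B = Set.univ)
    (hAtriv : ∀ a ∈ A, ∀ b ∈ A, a ◃ b = b) (hBtriv : ∀ a ∈ B, ∀ b ∈ B, a ◃ b = b)
    {m : ℕ} (hm : Nat.card A = m) :
    ∃ e : A ≃ ZMod m, ∀ b ∈ B, ∀ k, b ◃ (e.symm k : X) = e.symm (k + 1) := by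
  obtain ⟨m', e, he⟩ :
      ∃ m', ∃ e : A ≃ ZMod m', ∀ b ∈ B, ∀ k, b ◃ (e.symm k : X) = e.symm (k + 1) := by
    have hAS := orbit_quandleInn_eq_orbit_zpowers hA hB hcover hAtriv hBtriv
    refine ⟨_, (Equiv.setCongr hAS).trans (orbitZPowersEquiv (Rack.act' y) x), fun b hb k => ?_⟩
    simp only [Equiv.symm_trans_apply, Equiv.setCongr_symm_apply]
    rw [orbitZPowersEquiv_symm_add_one,
      act_eq_act_of_mem hA hB hcover hAtriv hBtriv hb (hAS.ge (Subtype.prop _))]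
    rfl
  obtain rfl : m' = m := by rw [← hm, Nat.card_congr e, Nat.card_zmod]
  exact ⟨e, he⟩

end TwoOrbits

theorem exists_equiv_zmod_prod_bool {X : Type} [Shelf X] {A B : Set X} (hAB : IsCompl A B)
    {m : ℕ} (e₁ : A ≃ ZMod m) (e₂ : B ≃ ZMod m)
    (hAtriv : ∀ a ∈ A, ∀ b ∈ A, a ◃ b = b) (hBtriv : ∀ a ∈ B, ∀ b ∈ B, a ◃ b = b)
    (h₁ : ∀ b ∈ B, ∀ k, b ◃ (e₁.symm k : X) = e₁.symm (k + 1))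
    (h₂ : ∀ a ∈ A, ∀ k, a ◃ (e₂.symm k : X) = e₂.symm (k + 1)) :
    ∃ e : X ≃ ZMod m × Bool, ∀ a b : X,
      e (a ◃ b) = (if (e a).2 = (e b).2 then (e b).1 else (e b).1 + 1, (e b).2) := by
  obtain rfl : B = Aᶜ := hAB.compl_eq.symm
  classical
  let f : ZMod m × Bool ≃ X := ((Equiv.prodComm _ _).trans (Equiv.boolProdEquivSum _)).trans
    ((Equiv.sumCongr e₁.symm e₂.symm).trans (Equiv.Set.sumCompl A))
  refine ⟨f.symm, fun a b => ?_⟩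
  obtain ⟨⟨k, i⟩, rfl⟩ := f.surjective a
  obtain ⟨⟨l, j⟩, rfl⟩ := f.surjective b
  rw [Equiv.symm_apply_eq]
  simp only [Equiv.symm_apply_apply]
  cases i <;> cases j <;> simp [f, hAtriv, hBtriv, h₁, h₂]

theorem stmt4_general (X : Type) [Quandle X] (Y₁ Y₂ : Set X)
    (horb₁ : ∃ x : X, Y₁ = MulAction.orbit (quandleInn X) x)
    (horb₂ : ∃ x : X, Y₂ = MulAction.orbit (quandleInn X) x)
    (hdisj : Disjoint Y₁ Y₂) (hcover : Y₁ ∪ Y₂ = Set.univ)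
    (hiso : ∃ g : X → X, Set.BijOn g Y₁ Y₂ ∧
      ∀ a ∈ Y₁, ∀ b ∈ Y₁, g (a ◃ b) = g a ◃ g b)
    (hcomm : ∀ a ∈ Y₁, ∀ b ∈ Y₁, a ◃ b = b)
    (n : ℕ) (hn : Y₁.ncard = n) :
    ∃ e : X ≃ ZMod n × Bool, ∀ a b : X,
      e (a ◃ b) =
        (if (e a).2 = (e b).2 then (e b).1 else (e b).1 + 1, (e b).2) := by
  obtain ⟨x₁, hY₁⟩ := horb₁
  obtain ⟨x₂, hY₂⟩ := horb₂
  obtain ⟨g, hg, hg_hom⟩ := hiso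
  have hcomm₂ : ∀ a ∈ Y₂, ∀ b ∈ Y₂, a ◃ b = b := by
    intro _ ha _ hb
    obtain ⟨a, ha₁, rfl⟩ := hg.surjOn ha
    obtain ⟨b, hb₁, rfl⟩ := hg.surjOn hb
    rw [← hg_hom a ha₁ b hb₁, hcomm a ha₁ b hb₁]
  have hcard₁ : Nat.card Y₁ = n := by rw [Nat.card_coe_set_eq, hn]
  have hcard₂ : Nat.card Y₂ = n := (Nat.card_congr (hg.equiv g)).symm.trans hcard₁
  obtain ⟨e₁, he₁⟩ := exists_equiv_zmod_act_eq_add_one hY₁ hY₂ hcover hcomm hcomm₂ hcard₁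
  obtain ⟨e₂, he₂⟩ := exists_equiv_zmod_act_eq_add_one hY₂ hY₁ (Set.union_comm Y₁ Y₂ ▸ hcover)
    hcomm₂ hcomm hcard₂
  exact exists_equiv_zmod_prod_bool ⟨hdisj, codisjoint_iff.2 hcover⟩ e₁ e₂ hcomm hcomm₂ he₁ he₂

theorem stmt4 (X : Type) [Quandle X] [Finite X] (Y₁ Y₂ : Set X)
    (horb₁ : ∃ x : X, Y₁ = MulAction.orbit (quandleInn X) x)
    (horb₂ : ∃ x : X, Y₂ = MulAction.orbit (quandleInn X) x)
    (hdisj : Disjoint Y₁ Y₂) (hcover : Y₁ ∪ Y₂ = Set.univ)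
    (hiso : ∃ g : X → X, Set.BijOn g Y₁ Y₂ ∧
      ∀ a ∈ Y₁, ∀ b ∈ Y₁, g (a ◃ b) = g a ◃ g b)
    (hcomm : ∀ a ∈ Y₁, ∀ b ∈ Y₁, a ◃ b = b)
    (n : ℕ) (hn : Y₁.ncard = n) :
    ∃ e : X ≃ ZMod n × Bool, ∀ a b : X,
      e (a ◃ b) =
        (if (e a).2 = (e b).2 then (e b).1 else (e b).1 + 1, (e b).2) :=
  stmt4_general X Y₁ Y₂ horb₁ horb₂ hdisj hcover hiso hcomm n hn
end

section
/- Let 𝕂 be a field and let G be a quotient of the group T, i.e. there exists a surjective group homomorphism T → G. Then every finite-dimensional absolutely simple 𝕂G-module has dimension at most four. -/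
/-!
Write `x = x₁` and `y = x₂`. The relations of `T` give the braid relation `xyx = yxy` and show
that `x³` commutes with `y`; the quotient `G` is generated by the images of `x`, `y` and the
central element `z`. For `a = yx⁻¹` and `b = x⁻¹y` these relations imply that `a²` is central,
`xax⁻¹ = ab`, `xbx⁻¹ = a` and `ba = a²·ab`. Over an algebraic closure, Schur's lemma makes `a²`
and `z` act as scalars on the simple module, so for an eigenvector `v` of `x` the span of
`v, av, bv, abv` is stable under `z`, `x` and `y = ax`, hence is the whole module.
-/

open scoped TensorProduct

/-- The translations of the conjugation quandle of the conjugacy class of `(1 2 3)` in `A₄`,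
written on `Fin 4` (0-indexed): `φ₁ = (2 4 3)`, `φ₂ = (1 3 4)`, `φ₃ = (1 4 2)`, `φ₄ = (1 2 3)`. -/
def phiA4 : Fin 4 → Fin 4 → Fin 4 :=
  ![![0, 3, 1, 2], ![2, 1, 3, 0], ![3, 0, 2, 1], ![1, 2, 0, 3]]

/-- The defining relations of the group `⟨x₁,…,x₄ ∣ xᵢxⱼ = x_{φᵢ(j)}xᵢ⟩`. -/
def TRels : Set (FreeGroup (Fin 4)) :=
  {r | ∃ i j : Fin 4,
    r = FreeGroup.of i * FreeGroup.of j * (FreeGroup.of i)⁻¹ * (FreeGroup.of (phiA4 i j))⁻¹}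

/-- The group `T = ⟨z⟩ × ⟨x₁,…,x₄ ∣ xᵢxⱼ = x_{φᵢ(j)}xᵢ⟩` with `⟨z⟩` infinite cyclic. -/
def TGroup : Type := Multiplicative ℤ × PresentedGroup TRels

instance : Group TGroup := inferInstanceAs (Group (Multiplicative ℤ × PresentedGroup TRels))

/-- The base change of a representation along a field extension `K ⊆ L`. -/
noncomputable def repBaseChange {K : Type} [Field K] (L : Type) [Field L] [Algebra K L]
    {G : Type} [Group G] {V : Type} [AddCommGroup V] [Module K V]
    (ρ : Representation K G V) : Representation L G (L ⊗[K] V) where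
  toFun g := LinearMap.baseChange L (ρ g)
  map_one' := by
    ext v
    simp
  map_mul' g h := by
    ext v
    simp

/-- A finite-dimensional representation is absolutely simple if all its base changes to
field extensions of `K` are simple. -/
def IsAbsolutelySimpleRep (K : Type) [Field K] (G : Type) [Group G]
    {V : Type} [AddCommGroup V] [Module K V] (ρ : Representation K G V) : Prop :=
  ∀ (L : Type) [Field L] [Algebra K L],
    IsSimpleModule (MonoidAlgebra L G) (repBaseChange L ρ).asModule

open Module Submodule
open scoped MonoidAlgebra

section Braid

variable {H : Type*} [Group H] {x y : H}

theorem mul_mul_inv_eq_of_braid (hbraid : x * y * x = y * x * y) (hcube : Commute (x ^ 3) y) :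
    x * (y * x⁻¹) = y * x⁻¹ * (x⁻¹ * y) * x := by
  have hcube' : (x ^ 3)⁻¹ * y = y * (x ^ 3)⁻¹ := hcube.inv_left.eq
  calc x * (y * x⁻¹) = (y * x * y) * x⁻¹ * x⁻¹ := by rw [← hbraid]; group
    _ = y * x * (y * (x ^ 3)⁻¹) * x := by group
    _ = y * x * ((x ^ 3)⁻¹ * y) * x := by rw [hcube']
    _ = y * x⁻¹ * (x⁻¹ * y) * x := by group

theorem commute_mul_inv_sq_of_braid (hbraid : x * y * x = y * x * y) (hcube : Commute (x ^ 3) y) :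
    Commute ((y * x⁻¹) ^ 2) x := by
  have hconj := mul_mul_inv_eq_of_braid hbraid hcube
  show (y * x⁻¹) ^ 2 * x = x * (y * x⁻¹) ^ 2
  calc (y * x⁻¹) ^ 2 * x = y * x⁻¹ * x⁻¹ * (x * y * x) * x⁻¹ := by rw [sq]; group
    _ = y * x⁻¹ * x⁻¹ * (y * x * y) * x⁻¹ := by rw [hbraid]
    _ = (y * x⁻¹ * (x⁻¹ * y) * x) * x⁻¹ * (x * y * x⁻¹) := by group
    _ = x * (y * x⁻¹) * x⁻¹ * (x * y * x⁻¹) := by rw [← hconj]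
    _ = x * (y * x⁻¹) ^ 2 := by rw [sq]; group

theorem inv_mul_mul_mul_inv_eq_of_braid (hbraid : x * y * x = y * x * y)
    (hcube : Commute (x ^ 3) y) :
    x⁻¹ * y * (y * x⁻¹) = (y * x⁻¹) ^ 2 * (y * x⁻¹ * (x⁻¹ * y)) := by
  have hconj := mul_mul_inv_eq_of_braid hbraid hcube
  have hyyx : y * y * x = x * (y * x⁻¹) * y * y := by
    rw [hconj]
    calc y * y * x = y * x⁻¹ * (x * y * x) := by group
      _ = y * x⁻¹ * (y * x * y) := by rw [hbraid]
      _ = y * x⁻¹ * x⁻¹ * (x * y * x) * y := by group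
      _ = y * x⁻¹ * x⁻¹ * (y * x * y) * y := by rw [hbraid]
      _ = y * x⁻¹ * (x⁻¹ * y) * x * y * y := by group
  calc x⁻¹ * y * (y * x⁻¹) = x⁻¹ * (y * y * x) * x⁻¹ * x⁻¹ := by group
    _ = x⁻¹ * (x * (y * x⁻¹) * y * y) * x⁻¹ * x⁻¹ := by rw [hyyx]
    _ = y * x⁻¹ * y * x⁻¹ * (x * (y * x⁻¹)) * x⁻¹ := by group
    _ = (y * x⁻¹) ^ 2 * (y * x⁻¹ * (x⁻¹ * y)) := by rw [hconj, sq]; group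

theorem mul_inv_sq_mem_center_of_braid {z : H} (hgen : Subgroup.closure {z, x, y} = ⊤)
    (hz : z ∈ Subgroup.center H) (hbraid : x * y * x = y * x * y) (hcube : Commute (x ^ 3) y) :
    (y * x⁻¹) ^ 2 ∈ Subgroup.center H := by
  have hax : Commute ((y * x⁻¹) ^ 2) x := commute_mul_inv_sq_of_braid hbraid hcube
  have hay : Commute ((y * x⁻¹) ^ 2) y := by
    simpa using ((Commute.self_pow (y * x⁻¹) 2).symm.mul_right hax)
  rw [← Subgroup.centralizer_univ, ← Subgroup.coe_top, ← hgen, Subgroup.centralizer_closure,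
    Subgroup.mem_centralizer_iff]
  rintro g (rfl | rfl | rfl)
  exacts [(Subgroup.mem_center_iff.mp hz _).symm, hax.eq.symm, hay.eq.symm]

end Braid

theorem MonoidHom.map_mem_center_of_surjective {G H : Type*} [Group G] [Group H] {f : G →* H}
    (hf : Function.Surjective f) {g : G} (hg : g ∈ Subgroup.center G) :
    f g ∈ Subgroup.center H :=
  Subgroup.mem_center_iff.mpr fun h => by
    obtain ⟨t, rfl⟩ := hf h
    rw [← map_mul, ← map_mul, Subgroup.mem_center_iff.mp hg t]

section InvariantSpan

variable {k W : Type*} [CommSemiring k] [AddCommMonoid W] [Module k W] {A B S : End k W} {μ : k}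

theorem span_mem_invtSubmodule_of_sq_eq_smul (hA : A ^ 2 = μ • 1) (v : W) :
    span k {v, A v, B v, A (B v)} ∈ A.invtSubmodule := by
  have hAA (w : W) : A (A w) = μ • w := by
    rw [← Module.End.mul_apply, ← sq, hA]; rfl
  rw [End.mem_invtSubmodule, span_le]
  simp only [Set.insert_subset_iff, Set.singleton_subset_iff, SetLike.mem_coe, mem_comap, hAA]
  refine ⟨subset_span ?_, smul_mem _ _ (subset_span ?_), subset_span ?_,
    smul_mem _ _ (subset_span ?_)⟩ <;> simp

theorem span_mem_invtSubmodule_of_hasEigenvector (hA : A ^ 2 = μ • 1) (hBA : B * A = μ • (A * B))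
    (hSA : S * A = A * B * S) (hSB : S * B = A * S) {s : k} {v : W} (hv : S v = s • v) :
    span k {v, A v, B v, A (B v)} ∈ S.invtSubmodule := by
  have hAA (w : W) : A (A w) = μ • w := by
    rw [← Module.End.mul_apply, ← sq, hA]; rfl
  have hBA' (w : W) : B (A w) = μ • A (B w) := LinearMap.congr_fun hBA w
  have hSA' (w : W) : S (A w) = A (B (S w)) := LinearMap.congr_fun hSA w
  have hSB' (w : W) : S (B w) = A (S w) := LinearMap.congr_fun hSB w
  rw [End.mem_invtSubmodule, span_le]
  simp only [Set.insert_subset_iff, Set.singleton_subset_iff, SetLike.mem_coe, mem_comap, hv, hSA',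
    hSB', map_smul, hBA', hAA, smul_smul]
  refine ⟨?_, ?_, ?_, ?_⟩ <;> exact smul_mem _ _ (subset_span (by simp))

end InvariantSpan

theorem finrank_span_insert_insert_insert_singleton_le {k W : Type*} [DivisionRing k]
    [AddCommGroup W] [Module k W] (a b c d : W) : finrank k (span k {a, b, c, d}) ≤ 4 := by
  classical
  have := finrank_span_finset_le_card (R := k) ({a, b, c, d} : Finset W)
  simp only [Finset.coe_insert, Finset.coe_singleton] at this
  exact this.trans Finset.card_le_four

theorem Module.End.mem_invtSubmodule_of_mul_eq_one {k V : Type*} [DivisionRing k] [AddCommGroup V]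
    [Module k V] [FiniteDimensional k V] {f g : End k V} (hgf : g * f = 1) {p : Submodule k V}
    (hp : p ∈ f.invtSubmodule) : p ∈ g.invtSubmodule := by
  have hgf' (u : V) : g (f u) = u := by rw [← Module.End.mul_apply, hgf, Module.End.one_apply]
  have hinj : Function.Injective (f.restrict hp) := fun u w h => Subtype.ext <|
    calc (u : V) = g (f u) := (hgf' u).symm
      _ = g (f w) := congrArg (fun x : p => g x) h
      _ = w := hgf' w
  intro v hv
  obtain ⟨u, hu⟩ := LinearMap.injective_iff_surjective.mp hinj ⟨v, hv⟩
  have hfu : f u = v := congrArg Subtype.val hu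
  simp [← hfu, hgf']

namespace Representation

variable {k G V : Type*} [Field k] [Group G] [AddCommGroup V] [Module k V]
  (ρ : Representation k G V)

theorem mem_invtSubmodule_of_closure_eq_top [FiniteDimensional k V] {s : Set G}
    (hs : Subgroup.closure s = ⊤) {p : Submodule k V}
    (hp : ∀ g ∈ s, p ∈ End.invtSubmodule (ρ g)) : p ∈ ρ.invtSubmodule := by
  refine ρ.mem_invtSubmodule.2 fun g => ?_
  have hg : g ∈ Subgroup.closure s := hs ▸ Subgroup.mem_top g
  induction hg using Subgroup.closure_induction with
  | mem g hg => exact hp g hg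
  | one => simp
  | mul g h _ _ hg hh => simpa only [map_mul, End.mul_eq_comp] using End.invtSubmodule.comp _ hg hh
  | inv g _ hg =>
    exact End.mem_invtSubmodule_of_mul_eq_one (by rw [← map_mul, inv_mul_cancel, map_one]) hg

theorem eq_bot_or_eq_top_of_mem_invtSubmodule [IsSimpleModule k[G] ρ.asModule]
    {p : Submodule k V} (hp : p ∈ ρ.invtSubmodule) : p = ⊥ ∨ p = ⊤ := by
  have : IsSimpleOrder ρ.invtSubmodule := ρ.mapSubmodule.isSimpleOrder_iff.mpr inferInstance
  rcases eq_bot_or_eq_top (⟨p, hp⟩ : ρ.invtSubmodule) with h | h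
  · exact .inl (congrArg Subtype.val h)
  · exact .inr (congrArg Subtype.val h)

theorem exists_eq_smul_one_of_mem_center [IsSimpleModule k[G] ρ.asModule] [IsAlgClosed k]
    [FiniteDimensional k V] {g : G} (hg : g ∈ Subgroup.center G) :
    ∃ μ : k, ρ g = μ • 1 := by
  have : Nontrivial V := IsSimpleModule.nontrivial k[G] ρ.asModule
  obtain ⟨μ, hμ⟩ := End.exists_eigenvalue (ρ g)
  have hinv : End.eigenspace (ρ g) μ ∈ ρ.invtSubmodule := ρ.mem_invtSubmodule.2 fun h =>
    End.mapsTo_genEigenspace_of_comm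
      (by rw [Commute, SemiconjBy, ← map_mul, ← map_mul, ← Subgroup.mem_center_iff.mp hg h]) μ 1
  have htop := (ρ.eq_bot_or_eq_top_of_mem_invtSubmodule hinv).resolve_left hμ
  exact ⟨μ, LinearMap.ext fun v => End.mem_eigenspace_iff.mp (htop ▸ mem_top)⟩

theorem finrank_le_four_of_braid [IsSimpleModule k[G] ρ.asModule] [IsAlgClosed k]
    [FiniteDimensional k V] {z x y : G} (hgen : Subgroup.closure {z, x, y} = ⊤)
    (hz : z ∈ Subgroup.center G) (hbraid : x * y * x = y * x * y) (hcube : Commute (x ^ 3) y) :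
    finrank k V ≤ 4 := by
  set a := y * x⁻¹ with ha
  set b := x⁻¹ * y with hb
  have hy : y = a * x := by rw [ha]; group
  have ha2 : a ^ 2 ∈ Subgroup.center G := mul_inv_sq_mem_center_of_braid hgen hz hbraid hcube
  obtain ⟨μ, hμ⟩ := ρ.exists_eq_smul_one_of_mem_center ha2
  obtain ⟨ν, hν⟩ := ρ.exists_eq_smul_one_of_mem_center hz
  have : Nontrivial V := IsSimpleModule.nontrivial k[G] ρ.asModule
  obtain ⟨v, hv⟩ := (End.exists_eigenvalue (ρ x)).choose_spec.exists_hasEigenvector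
  have hA : ρ a ^ 2 = μ • 1 := by rw [← map_pow, hμ]
  have hBA : ρ b * ρ a = μ • (ρ a * ρ b) := by
    rw [← map_mul, inv_mul_mul_mul_inv_eq_of_braid hbraid hcube, map_mul, hμ, smul_one_mul, map_mul]
  have hSA : ρ x * ρ a = ρ a * ρ b * ρ x := by
    rw [← map_mul, mul_mul_inv_eq_of_braid hbraid hcube, map_mul, map_mul]
  have hSB : ρ x * ρ b = ρ a * ρ x := by
    rw [← map_mul, ← map_mul, hb, ha]; group
  set U := span k {v, ρ a v, ρ b v, ρ a (ρ b v)}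
  have hUa : U ∈ End.invtSubmodule (ρ a) := span_mem_invtSubmodule_of_sq_eq_smul hA v
  have hUx : U ∈ End.invtSubmodule (ρ x) :=
    span_mem_invtSubmodule_of_hasEigenvector hA hBA hSA hSB hv.apply_eq_smul
  have hU : U ∈ ρ.invtSubmodule := by
    refine ρ.mem_invtSubmodule_of_closure_eq_top hgen ?_
    rintro g (rfl | rfl | rfl)
    · rw [hν]
      exact End.invtSubmodule_le_invtSubmodule_smul 1 ν (by simp)
    · exact hUx
    · rw [hy, map_mul, End.mul_eq_comp]
      exact End.invtSubmodule.comp _ hUa hUx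
  have hUtop : U = ⊤ := (ρ.eq_bot_or_eq_top_of_mem_invtSubmodule hU).resolve_left fun h =>
    hv.2 <| (mem_bot k).mp <| h ▸ subset_span (by simp)
  calc finrank k V = finrank k U := by rw [hUtop, finrank_top]
    _ ≤ 4 := finrank_span_insert_insert_insert_singleton_le _ _ _ _

end Representation

namespace TGroup

open PresentedGroup

theorem of_mul_of_mul_inv (i j : Fin 4) :
    (of i * of j * (of i)⁻¹ : PresentedGroup TRels) = of (phiA4 i j) := by
  have h := one_of_mem (rels := TRels) ⟨i, j, rfl⟩
  simp only [map_mul, map_inv] at h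
  exact mul_inv_eq_one.mp h

theorem braid : (of 0 * of 1 * of 0 : PresentedGroup TRels) = of 1 * of 0 * of 1 := by
  have h01 : (of 0 * of 1 * (of 0)⁻¹ : PresentedGroup TRels) = of 3 := of_mul_of_mul_inv 0 1
  have h13 : (of 1 * of 3 * (of 1)⁻¹ : PresentedGroup TRels) = of 0 := of_mul_of_mul_inv 1 3
  calc (of 0 * of 1 * of 0 : PresentedGroup TRels) = of 1 * of 3 * (of 1)⁻¹ * of 1 * of 0 := by
        rw [h13]
    _ = of 1 * (of 0 * of 1 * (of 0)⁻¹) * of 0 := by rw [h01]; group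
    _ = of 1 * of 0 * of 1 := by group

theorem commute_pow_three : Commute (of 0 ^ 3 : PresentedGroup TRels) (of 1) := by
  have h01 : (of 0 * of 1 * (of 0)⁻¹ : PresentedGroup TRels) = of 3 := of_mul_of_mul_inv 0 1
  have h03 : (of 0 * of 3 * (of 0)⁻¹ : PresentedGroup TRels) = of 2 := of_mul_of_mul_inv 0 3
  have h02 : (of 0 * of 2 * (of 0)⁻¹ : PresentedGroup TRels) = of 1 := of_mul_of_mul_inv 0 2
  refine mul_inv_eq_iff_eq_mul.mp ?_
  calc (of 0 ^ 3 * of 1 * (of 0 ^ 3)⁻¹ : PresentedGroup TRels)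
      = of 0 * (of 0 * (of 0 * of 1 * (of 0)⁻¹) * (of 0)⁻¹) * (of 0)⁻¹ := by rw [pow_three]; group
    _ = of 1 := by rw [h01, h03, h02]

theorem closure_of_zero_of_one :
    Subgroup.closure {(of 0 : PresentedGroup TRels), of 1} = ⊤ := by
  rw [eq_top_iff, ← closure_range_of, Subgroup.closure_le]
  have h0 : of 0 ∈ Subgroup.closure {(of 0 : PresentedGroup TRels), of 1} :=
    Subgroup.subset_closure (by simp)
  have h1 : of 1 ∈ Subgroup.closure {(of 0 : PresentedGroup TRels), of 1} :=
    Subgroup.subset_closure (by simp)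
  have h3 := mul_mem (mul_mem h0 h1) (inv_mem h0)
  rw [of_mul_of_mul_inv] at h3
  have h2 := mul_mem (mul_mem h0 h3) (inv_mem h0)
  rw [of_mul_of_mul_inv] at h2
  rintro _ ⟨j, rfl⟩
  fin_cases j
  exacts [h0, h1, h2, h3]

theorem closure_eq_top :
    Subgroup.closure {((Multiplicative.ofAdd 1, 1) : TGroup), (1, of 0), (1, of 1)} = ⊤ := by
  set H := Subgroup.closure {((Multiplicative.ofAdd 1, 1) : TGroup), (1, of 0), (1, of 1)}
  have hz (n : ℤ) : ((Multiplicative.ofAdd n, 1) : TGroup) ∈ H := by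
    have : ((Multiplicative.ofAdd n, 1) : TGroup) = (Multiplicative.ofAdd 1, 1) ^ n :=
      Prod.ext (by simp [← ofAdd_zsmul]) (by simp)
    exact this ▸ zpow_mem (Subgroup.subset_closure (by simp)) n
  have hP : Subgroup.closure {(of 0 : PresentedGroup TRels), of 1} ≤
      H.comap (MonoidHom.inr (Multiplicative ℤ) (PresentedGroup TRels)) := by
    rw [Subgroup.closure_le]
    rintro _ (rfl | rfl) <;> exact Subgroup.subset_closure (by simp)
  rw [closure_of_zero_of_one] at hP
  rw [eq_top_iff]
  rintro ⟨m, p⟩ -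
  have : ((m, p) : TGroup) = (Multiplicative.ofAdd m.toAdd, 1) * (1, p) :=
    Prod.ext (mul_one m).symm (one_mul p).symm
  exact this ▸ mul_mem (hz m.toAdd) (hP (Subgroup.mem_top p))

theorem closure_map_eq_top {G : Type*} [Group G] {f : TGroup →* G} (hf : Function.Surjective f) :
    Subgroup.closure {f (Multiplicative.ofAdd 1, 1), f (1, of 0), f (1, of 1)} = ⊤ := by
  refine eq_top_iff.mpr fun g _ => ?_
  obtain ⟨t, rfl⟩ := hf g
  refine Subgroup.mem_comap.mp <|
    (Subgroup.closure_le _).mpr ?_ (closure_eq_top ▸ Subgroup.mem_top t)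
  rintro _ (rfl | rfl | rfl)
  exacts [Subgroup.subset_closure (Set.mem_insert _ _),
    Subgroup.subset_closure (Set.mem_insert_of_mem _ (Set.mem_insert _ _)),
    Subgroup.subset_closure (Set.mem_insert_of_mem _ (Set.mem_insert_of_mem _ rfl))]

theorem mem_center : ((Multiplicative.ofAdd 1, 1) : TGroup) ∈ Subgroup.center TGroup :=
  Subgroup.mem_center_iff.mpr fun ⟨m, p⟩ =>
    Prod.ext (mul_comm m _) ((mul_one p).trans (one_mul p).symm)

end TGroup

theorem stmt7 (K : Type) [Field K] (G : Type) [Group G]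
    (f : TGroup →* G) (hf : Function.Surjective f)
    (V : Type) [AddCommGroup V] [Module K V] [FiniteDimensional K V]
    (ρ : Representation K G V) (hρ : IsAbsolutelySimpleRep K G ρ) :
    Module.finrank K V ≤ 4 := by
  have := hρ (AlgebraicClosure K)
  let φ := f.comp (MonoidHom.inr (Multiplicative ℤ) (PresentedGroup TRels))
  have hbraid := congrArg φ TGroup.braid
  have hcube := TGroup.commute_pow_three.map φ
  simp only [map_mul, map_pow] at hbraid hcube
  rw [← Module.finrank_baseChange (R := AlgebraicClosure K)]
  exact (repBaseChange (AlgebraicClosure K) ρ).finrank_le_four_of_braid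
    (TGroup.closure_map_eq_top hf) (f.map_mem_center_of_surjective hf TGroup.mem_center)
    hbraid hcube
end

section
/- Let n ≥ 2 and let G be a quotient of Γₙ, i.e. there exists a surjective group homomorphism Γₙ → G. Then (1) G has abelian centralizers, and (2) every conjugacy class of G has at most n elements. -/
/-!
Write `g, h, ε` also for their images in `G`, which generate `G`. Conjugation by `g` inverts `ε`
and `h` commutes with `ε`, so `⟨ε⟩` is normal, and `G/⟨ε⟩` is abelian because `hg = εgh` there
becomes `hg = gh`. Hence every conjugate of `x` lies in `⟨ε⟩x`, which has at most `n` elements.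

Since `g²` commutes with `h` and `ε`, `A = ⟨g², h, ε⟩` is abelian; it contains `⟨ε⟩ ⊇ [G, G]`, so
it is normal, and `G/A` is generated by the image of `g`, of order dividing 2. A group with an
abelian subgroup `A` of index at most 2 has abelian centralizers: an element commuting with `A` and
with one element outside `A` is central. So a non-central `x ∈ A` has centralizer `A`, while for
`x ∉ A` the elements of the centralizer lying in `A` are central and any two lying outside `A`
differ by such a central factor.
-/

/-- The defining relations of the group
`Γₙ = ⟨g, h, ε ∣ hg = εgh, gε = ε⁻¹g, hε = εh, εⁿ = 1⟩`,
with generators `0 ↦ g`, `1 ↦ h`, `2 ↦ ε`. -/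
def GammaRels (n : ℕ) : Set (FreeGroup (Fin 3)) :=
  { FreeGroup.of 1 * FreeGroup.of 0 * (FreeGroup.of 2 * FreeGroup.of 0 * FreeGroup.of 1)⁻¹,
    FreeGroup.of 0 * FreeGroup.of 2 * ((FreeGroup.of 2)⁻¹ * FreeGroup.of 0)⁻¹,
    FreeGroup.of 1 * FreeGroup.of 2 * (FreeGroup.of 2 * FreeGroup.of 1)⁻¹,
    (FreeGroup.of 2) ^ n }

/-- The group `Γₙ = ⟨g, h, ε ∣ hg = εgh, gε = ε⁻¹g, hε = εh, εⁿ = 1⟩`. -/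
def Gamma (n : ℕ) : Type := PresentedGroup (GammaRels n)

instance (n : ℕ) : Group (Gamma n) := inferInstanceAs (Group (PresentedGroup (GammaRels n)))

/-- A group has abelian centralizers if the centralizer of every non-central element
is abelian. -/
def HasAbelianCentralizers (G : Type) [Group G] : Prop :=
  ∀ x : G, x ∉ Subgroup.center G →
    ∀ a ∈ Subgroup.centralizer {x}, ∀ b ∈ Subgroup.centralizer {x}, a * b = b * a

open Subgroup
open scoped commutatorElement

section IndexTwo

variable {G : Type*} [Group G] {A : Subgroup G}

theorem Subgroup.inv_mul_mem_of_index_dvd_two (hA : A.index ∣ 2) {x y : G} (hx : x ∉ A)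
    (hy : y ∉ A) : x⁻¹ * y ∈ A := by
  obtain ⟨c, hc⟩ := index_dvd_two_iff'.mp hA
  simpa [mul_assoc] using mul_mem (inv_mem ((hc x).resolve_right hx)) ((hc y).resolve_right hy)

theorem Subgroup.mem_center_of_index_dvd_two (hA : A.index ∣ 2) {g y : G} (hy : y ∉ A)
    (hgA : ∀ a ∈ A, Commute g a) (hgy : Commute g y) : g ∈ center G := by
  refine mem_center_iff.mpr fun w => (?_ : Commute g w).eq.symm
  by_cases hw : w ∈ A
  · exact hgA w hw
  · simpa using hgy.mul_right (hgA _ (inv_mul_mem_of_index_dvd_two hA hy hw))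

theorem HasAbelianCentralizers.of_index_dvd_two {G : Type} [Group G] (A : Subgroup G)
    [IsMulCommutative A] (hA : A.index ∣ 2) : HasAbelianCentralizers G := by
  have hcomm : ∀ u ∈ A, ∀ v ∈ A, Commute u v := fun u hu v hv => setLike_mul_comm hu hv
  intro x hx u hu v hv
  replace hu : Commute u x := mem_centralizer_singleton_iff.mp hu
  replace hv : Commute v x := mem_centralizer_singleton_iff.mp hv
  by_cases hxA : x ∈ A
  · have mem_A : ∀ w, Commute w x → w ∈ A := fun w hw => by
      by_contra hwA
      exact hx (mem_center_of_index_dvd_two hA hwA (hcomm x hxA) hw.symm)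
    exact (hcomm u (mem_A u hu) v (mem_A v hv)).eq
  have central : ∀ w ∈ A, Commute w x → w ∈ center G := fun w hw hwx =>
    mem_center_of_index_dvd_two hA hxA (hcomm w hw) hwx
  by_cases huA : u ∈ A
  · exact (mem_center_iff.mp (central u huA hu) v).symm
  by_cases hvA : v ∈ A
  · exact mem_center_iff.mp (central v hvA hv) u
  have hcentral := central _ (inv_mul_mem_of_index_dvd_two hA huA hvA) (hu.inv_left.mul_left hv)
  simpa using ((Commute.refl u).mul_right (mem_center_iff.mp hcentral u)).eq

end IndexTwo

section ConjClasses

variable {G : Type*} [Group G]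

theorem finite_setOf_isConj_and_ncard_le_of_commutator_le {H : Subgroup G} [Finite H]
    (hH : commutator G ≤ H) (x : G) :
    {y | IsConj x y}.Finite ∧ {y | IsConj x y}.ncard ≤ Nat.card H := by
  have hsub : {y | IsConj x y} ⊆ (· * x) '' (H : Set G) := by
    rintro y hy
    obtain ⟨c, rfl⟩ := isConj_iff.mp hy
    exact ⟨⁅c, x⁆, hH (commutator_mem_commutator (mem_top c) (mem_top x)), by group⟩
  have hfin : ((· * x) '' (H : Set G)).Finite := (Set.toFinite (H : Set G)).image _
  refine ⟨hfin.subset hsub, (Set.ncard_le_ncard hsub hfin).trans ?_⟩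
  rw [Set.ncard_image_of_injective _ (mul_left_injective x)]
  exact (Nat.card_coe_set_eq _).ge

end ConjClasses

theorem isMulCommutative_of_closure_eq_top {G : Type*} [Group G] {s : Set G}
    (hs : closure s = ⊤) (hcomm : ∀ x ∈ s, ∀ y ∈ s, x * y = y * x) : IsMulCommutative G := by
  have := isMulCommutative_closure hcomm
  exact isMulCommutative_iff.mpr fun x y =>
    setLike_mul_comm (s := closure s) (hs ▸ mem_top x) (hs ▸ mem_top y)

structure IsGammaTriple {G : Type*} [Group G] (g h ε : G) : Prop where
  h_mul_g : h * g = ε * g * h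
  g_mul_ε : g * ε = ε⁻¹ * g
  h_mul_ε : h * ε = ε * h
  closure_eq_top : closure {g, h, ε} = ⊤

namespace IsGammaTriple

variable {G H : Type*} [Group G] [Group H] {g h ε : G}

theorem map (hΓ : IsGammaTriple g h ε) {f : G →* H} (hf : Function.Surjective f) :
    IsGammaTriple (f g) (f h) (f ε) where
  h_mul_g := by simpa using congrArg f hΓ.h_mul_g
  g_mul_ε := by simpa using congrArg f hΓ.g_mul_ε
  h_mul_ε := by simpa using congrArg f hΓ.h_mul_ε
  closure_eq_top := by
    rw [← Set.image_singleton, ← Set.image_insert_eq, ← Set.image_insert_eq,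
      ← MonoidHom.map_closure, hΓ.closure_eq_top, map_top_of_surjective f hf]

theorem isMulCommutative_of_ε_eq_one (hΓ : IsGammaTriple g h ε) (hε : ε = 1) :
    IsMulCommutative G := by
  have hgh : g * h = h * g := by simpa [hε] using hΓ.h_mul_g.symm
  refine isMulCommutative_of_closure_eq_top hΓ.closure_eq_top ?_
  rintro x (rfl | rfl | rfl) y (rfl | rfl | rfl) <;> simp [hε, hgh]

theorem g_mul_inv_ε (hΓ : IsGammaTriple g h ε) : g * ε⁻¹ = ε * g := by
  rw [mul_inv_eq_iff_eq_mul, mul_assoc, hΓ.g_mul_ε, mul_inv_cancel_left]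

theorem sq_g_mul_h (hΓ : IsGammaTriple g h ε) : g ^ 2 * h = h * g ^ 2 := by
  rw [sq, ← mul_assoc h, hΓ.h_mul_g, mul_assoc (ε * g) h g, hΓ.h_mul_g,
    show ε * g * (ε * g * h) = ε * (g * ε) * g * h by group, hΓ.g_mul_ε]
  group

theorem sq_g_mul_ε (hΓ : IsGammaTriple g h ε) : g ^ 2 * ε = ε * g ^ 2 := by
  rw [sq, mul_assoc, hΓ.g_mul_ε, ← mul_assoc, hΓ.g_mul_inv_ε, mul_assoc]

theorem zpowers_normal (hΓ : IsGammaTriple g h ε) : (zpowers ε).Normal := by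
  have mem_normalizer : ∀ c, (c * ε * c⁻¹ = ε ∨ c * ε * c⁻¹ = ε⁻¹) →
      c ∈ normalizer (zpowers ε : Set G) := by
    rintro c (hc | hc) <;>
      rw [mem_normalizer_iff_map_conj_eq, MonoidHom.map_zpowers, MonoidHom.coe_coe,
        MulAut.conj_apply, hc]
    exact zpowers_inv
  rw [← normalizer_eq_top_iff, eq_top_iff, ← hΓ.closure_eq_top, closure_le]
  rintro _ (rfl | rfl | rfl)
  · exact mem_normalizer _ (.inr (by rw [hΓ.g_mul_ε, mul_inv_cancel_right]))
  · exact mem_normalizer _ (.inl (by rw [hΓ.h_mul_ε, mul_inv_cancel_right]))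
  · exact mem_normalizer _ (.inl (mul_inv_cancel_right _ _))

theorem commutator_le_zpowers (hΓ : IsGammaTriple g h ε) : commutator G ≤ zpowers ε := by
  have := hΓ.zpowers_normal
  exact Normal.quotient_commutative_iff_commutator_le.mp
    ((hΓ.map (QuotientGroup.mk'_surjective (zpowers ε))).isMulCommutative_of_ε_eq_one
      ((QuotientGroup.eq_one_iff ε).mpr (mem_zpowers ε)))

theorem isMulCommutative_closure_sq (hΓ : IsGammaTriple g h ε) :
    IsMulCommutative (closure {g ^ 2, h, ε}) := by
  refine isMulCommutative_closure ?_
  rintro x (rfl | rfl | rfl) y (rfl | rfl | rfl) <;>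
    simp [hΓ.sq_g_mul_h, hΓ.sq_g_mul_ε, hΓ.h_mul_ε]

theorem index_closure_sq_dvd_two (hΓ : IsGammaTriple g h ε) :
    (closure {g ^ 2, h, ε}).index ∣ 2 := by
  set A := closure {g ^ 2, h, ε}
  have : A.Normal :=
    .of_commutator_le _ (hΓ.commutator_le_zpowers.trans (zpowers_le.mpr (subset_closure (by simp))))
  have mk_eq_one {x : G} (hx : x ∈ ({g ^ 2, h, ε} : Set G)) : (x : G ⧸ A) = 1 :=
    (QuotientGroup.eq_one_iff x).mpr (subset_closure hx)
  have hq := hΓ.map (QuotientGroup.mk'_surjective A)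
  have zpowers_eq_top : zpowers (g : G ⧸ A) = ⊤ := by
    rw [eq_top_iff, ← hq.closure_eq_top, closure_le]
    rintro _ (rfl | rfl | rfl)
    · exact mem_zpowers _
    · rw [QuotientGroup.mk'_apply, mk_eq_one (x := h) (by simp)]; exact one_mem _
    · rw [QuotientGroup.mk'_apply, mk_eq_one (x := ε) (by simp)]; exact one_mem _
  rw [index_eq_card, ← card_top, ← zpowers_eq_top, Nat.card_zpowers]
  exact orderOf_dvd_of_pow_eq_one (mk_eq_one (by simp))

theorem hasAbelianCentralizers {G : Type} [Group G] {g h ε : G} (hΓ : IsGammaTriple g h ε) :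
    HasAbelianCentralizers G :=
  have := hΓ.isMulCommutative_closure_sq
  .of_index_dvd_two _ hΓ.index_closure_sq_dvd_two

theorem finite_setOf_isConj_and_ncard_le (hΓ : IsGammaTriple g h ε) {n : ℕ} (hn : 0 < n)
    (hεn : ε ^ n = 1) (x : G) :
    {y | IsConj x y}.Finite ∧ {y | IsConj x y}.ncard ≤ n := by
  have : Finite (zpowers ε) :=
    (isOfFinOrder_iff_pow_eq_one.mpr ⟨n, hn, hεn⟩).finite_zpowers.to_subtype
  obtain ⟨hfin, hcard⟩ :=
    finite_setOf_isConj_and_ncard_le_of_commutator_le hΓ.commutator_le_zpowers x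
  exact ⟨hfin, hcard.trans (Nat.card_zpowers ε ▸ orderOf_le_of_pow_eq_one hn hεn)⟩

end IsGammaTriple

namespace Gamma

def g (n : ℕ) : Gamma n := PresentedGroup.of 0

def h (n : ℕ) : Gamma n := PresentedGroup.of 1

def ε (n : ℕ) : Gamma n := PresentedGroup.of 2

theorem isGammaTriple (n : ℕ) : IsGammaTriple (g n) (h n) (ε n) where
  h_mul_g := PresentedGroup.mk_eq_mk_of_mul_inv_mem (by simp [GammaRels])
  g_mul_ε := PresentedGroup.mk_eq_mk_of_mul_inv_mem (by simp [GammaRels])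
  h_mul_ε := PresentedGroup.mk_eq_mk_of_mul_inv_mem (by simp [GammaRels])
  closure_eq_top := by
    refine (eq_top_iff' _).mpr fun x =>
      PresentedGroup.generated_by (GammaRels n) _ (fun i => ?_) x
    fin_cases i
    · exact subset_closure (Set.mem_insert _ _)
    · exact subset_closure (Set.mem_insert_of_mem _ (Set.mem_insert _ _))
    · exact subset_closure (Set.mem_insert_of_mem _ (Set.mem_insert_of_mem _ rfl))

theorem ε_pow_eq_one (n : ℕ) : ε n ^ n = 1 :=
  PresentedGroup.one_of_mem (by simp [GammaRels])

end Gamma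

theorem stmt8 (n : ℕ) (hn : 2 ≤ n) (G : Type) [Group G]
    (f : Gamma n →* G) (hf : Function.Surjective f) :
    HasAbelianCentralizers G ∧
    ∀ x : G, {y : G | IsConj x y}.Finite ∧ Set.ncard {y : G | IsConj x y} ≤ n := by
  have hΓ := (Gamma.isGammaTriple n).map hf
  exact ⟨hΓ.hasAbelianCentralizers, hΓ.finite_setOf_isConj_and_ncard_le (by omega)
    (by rw [← map_pow, Gamma.ε_pow_eq_one, map_one])⟩
end

section
/- Let (c₁, c₂, …, cₙ) be a characteristic sequence. Then n ≥ 3, and there exists i ∈ {1,…,n} such that cᵢ = 1 and cᵢ₊₁ ∈ {1,2,3}, or cᵢ = 1 and cᵢ₋₁ ∈ {1,2,3}, where indices are read cyclically (c₀ = cₙ and cₙ₊₁ = c₁). -/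
/-- The map `η : ℤ → SL(2,ℤ)` (as a 2×2 integer matrix) sending `c` to `!![c, -1; 1, 0]`. -/
def etaMat (c : ℤ) : Matrix (Fin 2) (Fin 2) ℤ := !![c, -1; 1, 0]

/-- `(c 0, c 1, …, c (n-1))` is a characteristic sequence: a sequence of positive integers
whose `η`-product is `-id` and such that all proper partial products have a non-negative
first column. -/
def IsCharacteristicSequence (n : ℕ) (c : ℕ → ℕ) : Prop :=
  (∀ i < n, 0 < c i) ∧
  ((List.range n).map (fun i => etaMat (c i))).prod = -1 ∧
  ∀ k < n, 0 ≤ ((List.range k).map (fun i => etaMat (c i))).prod 0 0 ∧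
    0 ≤ ((List.range k).map (fun i => etaMat (c i))).prod 1 0

def Pm (c : ℕ → ℕ) (k : ℕ) : Matrix (Fin 2) (Fin 2) ℤ :=
  ((List.range k).map (fun i => etaMat (c i))).prod

lemma Pm_succ (c : ℕ → ℕ) (k : ℕ) : Pm c (k+1) = Pm c k * etaMat (c k) := by
  simp [Pm, List.range_succ]

def Aa (c : ℕ → ℕ) (k : ℕ) : ℤ := Pm c k 0 0
def Bb (c : ℕ → ℕ) (k : ℕ) : ℤ := Pm c k 1 0
def Ee (c : ℕ → ℕ) (k : ℕ) : ℤ := Pm c k 0 1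
def Ff (c : ℕ → ℕ) (k : ℕ) : ℤ := Pm c k 1 1

lemma recA (c : ℕ → ℕ) (k : ℕ) : Aa c (k+1) = c k * Aa c k + Ee c k := by
  simp only [Aa, Ee, Pm_succ, Matrix.mul_apply, Fin.sum_univ_two, etaMat]
  simp; ring

lemma recB (c : ℕ → ℕ) (k : ℕ) : Bb c (k+1) = c k * Bb c k + Ff c k := by
  simp only [Bb, Ff, Pm_succ, Matrix.mul_apply, Fin.sum_univ_two, etaMat]
  simp; ring

lemma recE (c : ℕ → ℕ) (k : ℕ) : Ee c (k+1) = -Aa c k := by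
  simp only [Aa, Ee, Pm_succ, Matrix.mul_apply, Fin.sum_univ_two, etaMat]
  simp

lemma recF (c : ℕ → ℕ) (k : ℕ) : Ff c (k+1) = -Bb c k := by
  simp only [Bb, Ff, Pm_succ, Matrix.mul_apply, Fin.sum_univ_two, etaMat]
  simp

lemma Pm_det (c : ℕ → ℕ) (k : ℕ) : (Pm c k).det = 1 := by
  induction k with
  | zero => simp [Pm]
  | succ k ih => rw [Pm_succ, Matrix.det_mul, ih, etaMat, Matrix.det_fin_two_of]; ring

lemma det_entries (c : ℕ → ℕ) (k : ℕ) :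
    Aa c k * Ff c k - Ee c k * Bb c k = 1 := by
  have := Pm_det c k
  rw [Matrix.det_fin_two] at this
  exact this

lemma cross (c : ℕ → ℕ) (k : ℕ) :
    Aa c k * Bb c (k+1) - Bb c k * Aa c (k+1) = 1 := by
  rw [recA, recB]
  linear_combination det_entries c k

lemma rec2A (c : ℕ → ℕ) (k : ℕ) : Aa c (k+2) = c (k+1) * Aa c (k+1) - Aa c k := by
  rw [recA, recE]; ring

lemma rec2B (c : ℕ → ℕ) (k : ℕ) : Bb c (k+2) = c (k+1) * Bb c (k+1) - Bb c k := by
  rw [recB, recF]; ring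

lemma Aa0 (c : ℕ → ℕ) : Aa c 0 = 1 := by simp [Aa, Pm, Matrix.one_apply]
lemma Bb0 (c : ℕ → ℕ) : Bb c 0 = 0 := by simp [Bb, Pm, Matrix.one_apply]
lemma Ee0 (c : ℕ → ℕ) : Ee c 0 = 0 := by simp [Ee, Pm, Matrix.one_apply]
lemma Ff0 (c : ℕ → ℕ) : Ff c 0 = 1 := by simp [Ff, Pm, Matrix.one_apply]

lemma Aa1 (c : ℕ → ℕ) : Aa c 1 = c 0 := by rw [recA, Aa0, Ee0]; ring
lemma Bb1 (c : ℕ → ℕ) : Bb c 1 = 1 := by rw [recB, Bb0, Ff0]; ring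

/-- the three in {1,2,3} membership unfolding -/
lemma mem123 (m : ℕ) : m ∈ ({1, 2, 3} : Set ℕ) ↔ (m = 1 ∨ m = 2 ∨ m = 3) := by
  simp [Set.mem_insert_iff]

theorem stmt10 (n : ℕ) (c : ℕ → ℕ) (hc : IsCharacteristicSequence n c) :
    3 ≤ n ∧ ∃ i < n, c i = 1 ∧
      (c ((i + 1) % n) ∈ ({1, 2, 3} : Set ℕ) ∨ c ((i + n - 1) % n) ∈ ({1, 2, 3} : Set ℕ)) := by
  obtain ⟨hpos, hprod, hnn⟩ := hc
  have hprod' : Pm c n = -1 := hprod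
  have hAn : Aa c n = -1 := by simp [Aa, hprod']
  have hBn : Bb c n = 0 := by simp [Bb, hprod']
  have hEn : Ee c n = 0 := by simp [Ee, hprod']
  have hFn : Ff c n = -1 := by simp [Ff, hprod']
  have hA : ∀ k, k < n → 0 ≤ Aa c k ∧ 0 ≤ Bb c k := hnn
  -- n ≥ 3
  have hn3 : 3 ≤ n := by
    by_contra h
    push_neg at h
    interval_cases n
    · rw [Aa0] at hAn; norm_num at hAn
    · have := Bb1 c; rw [hBn] at this; norm_num at this
    · have h2 := rec2B c 0
      rw [show (0+2 : ℕ) = 2 from rfl, show (0+1 : ℕ) = 1 from rfl, hBn, Bb1, Bb0] at h2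
      have hc1 : 0 < c 1 := hpos 1 (by norm_num)
      have : (0:ℤ) < c 1 := by exact_mod_cast hc1
      nlinarith
  refine ⟨hn3, ?_⟩
  -- norm function
  set S : ℕ → ℤ := fun k => Aa c k + Bb c k with hS
  -- S j ≥ 1 for j < n
  have hSpos : ∀ j, j < n → 1 ≤ S j := by
    intro j hj
    obtain ⟨ha, hb⟩ := hA j hj
    by_contra h
    push_neg at h
    have ha0 : Aa c j = 0 := by simp only [hS] at h; omega
    have hb0 : Bb c j = 0 := by simp only [hS] at h; omega
    have := cross c j
    rw [ha0, hb0] at this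
    norm_num at this
  -- max
  obtain ⟨k, hk, hmax⟩ := (Finset.range n).exists_max_image S ⟨0, by simp; omega⟩
  rw [Finset.mem_range] at hk
  have hmax' : ∀ j, j < n → S j ≤ S k := fun j hj => hmax j (Finset.mem_range.mpr hj)
  -- S 1 = c 0 + 1 ≥ 2
  have hS1 : S 1 = c 0 + 1 := by simp [hS, Aa1, Bb1]
  have hc0 : 0 < c 0 := hpos 0 (by omega)
  have hN2 : 2 ≤ S k := by
    have h1 := hmax' 1 (by omega)
    rw [hS1] at h1
    have : (1:ℤ) ≤ c 0 := by exact_mod_cast hc0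
    linarith
  -- endpoint values at n-1
  obtain ⟨nm, rfl⟩ : ∃ m, n = m + 1 := ⟨n - 1, by omega⟩
  have hAnm : Aa c nm = 0 := by have := recE c nm; rw [hEn] at this; linarith
  have hBnm : Bb c nm = 1 := by have := recF c nm; rw [hFn] at this; linarith
  have hSnm : S nm = 1 := by simp [hS, hAnm, hBnm]
  -- k is interior
  have hk0 : k ≠ 0 := by
    intro h; rw [h] at hN2; simp [hS, Aa0, Bb0] at hN2
  have hknm : k ≠ nm := by
    intro h; rw [h, hSnm] at hN2; omega
  obtain ⟨m, rfl⟩ : ∃ m, k = m + 1 := ⟨k - 1, by omega⟩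
  have hm2n : m + 2 < nm + 1 := by omega
  -- c (m+1) = 1
  have hrA := rec2A c m
  have hrB := rec2B c m
  have hSm_le := hmax' m (by omega)
  have hSm2_le := hmax' (m+2) (by omega)
  have hSm_pos := hSpos m (by omega)
  have hSm2_pos := hSpos (m+2) (by omega)
  have hcross := cross c m
  have eSm : Aa c m + Bb c m = S m := rfl
  have eSm1 : Aa c (m+1) + Bb c (m+1) = S (m+1) := rfl
  have eSm2 : Aa c (m+2) + Bb c (m+2) = S (m+2) := rfl
  have hck : c (m + 1) = 1 := by
    by_contra h
    have hc2 : (2:ℤ) ≤ (c (m+1) : ℤ) := by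
      have h2 := hpos (m+1) (by omega)
      have : 2 ≤ c (m+1) := by omega
      exact_mod_cast this
    have hsum : S m + S (m+2) = (c (m+1) : ℤ) * S (m+1) := by
      rw [← eSm, ← eSm1, ← eSm2]; linear_combination hrA + hrB
    have hmul : 2 * S (m+1) ≤ (c (m+1) : ℤ) * S (m+1) :=
      mul_le_mul_of_nonneg_right hc2 (by linarith)
    have hSmEq : S m = S (m+1) := by linarith
    have hdet : S (m+1) * (Bb c (m+1) - Bb c m) = 1 := by
      have e1 : Aa c m + Bb c m = S (m+1) := by rw [eSm, hSmEq]
      linear_combination hcross - Bb c (m+1) * e1 + Bb c m * eSm1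
    have hdvd : S (m+1) ∣ 1 := ⟨_, hdet.symm⟩
    have := Int.le_of_dvd one_pos hdvd
    omega
  -- main conclusion
  refine ⟨m + 1, by omega, hck, ?_⟩
  have hmod1 : (m + 1 + 1) % (nm + 1) = m + 2 := Nat.mod_eq_of_lt hm2n
  have hmod2 : (m + 1 + (nm + 1) - 1) % (nm + 1) = m := by
    have he : m + 1 + (nm + 1) - 1 = m + (nm + 1) := by omega
    rw [he, Nat.add_mod_right, Nat.mod_eq_of_lt (by omega)]
  rw [hmod1, hmod2, mem123, mem123]
  by_contra hcon
  push_neg at hcon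
  obtain ⟨hR, hL⟩ := hcon
  have hposR := hpos (m+2) (by omega)
  have hposL := hpos m (by omega)
  have hR4 : (4:ℤ) ≤ (c (m+2) : ℤ) := by
    have : 4 ≤ c (m+2) := by omega
    exact_mod_cast this
  have hL4 : (4:ℤ) ≤ (c m : ℤ) := by
    have : 4 ≤ c m := by omega
    exact_mod_cast this
  -- with c(m+1) = 1 : u(m+1) = u m + u(m+2)
  have hck' : (c (m+1) : ℤ) = 1 := by rw [hck]; norm_num
  rw [hck'] at hrA hrB
  have hAsum : Aa c (m+1) = Aa c m + Aa c (m+2) := by linarith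
  have hBsum : Bb c (m+1) = Bb c m + Bb c (m+2) := by linarith
  have hNpq : S (m+1) = S m + S (m+2) := by
    rw [← eSm, ← eSm1, ← eSm2]; linarith
  obtain ⟨hAm, hBm⟩ := hA m (by omega)
  obtain ⟨hAm2, hBm2⟩ := hA (m+2) (by omega)
  -- right side
  have hrA2 : Aa c (m+3) = (c (m+2) : ℤ) * Aa c (m+2) - Aa c (m+1) := by
    simpa [show m+1+2 = m+3 by omega, show m+1+1 = m+2 by omega] using rec2A c (m+1)
  have hrB2 : Bb c (m+3) = (c (m+2) : ℤ) * Bb c (m+2) - Bb c (m+1) := by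
    simpa [show m+1+2 = m+3 by omega, show m+1+1 = m+2 by omega] using rec2B c (m+1)
  have hright : S (m+2) ≤ S m ∧ (m + 3 = nm + 1 → S (m+2) = 1 ∧ 4 ≤ S m) := by
    rcases Nat.lt_or_ge (m+3) (nm+1) with hlt | hge
    · have hle3 := hmax' (m+3) hlt
      have hS3pos := hSpos (m+3) hlt
      have hsum3 : S (m+3) + S (m+1) = (c (m+2) : ℤ) * S (m+2) := by
        rw [← eSm1, ← eSm2]
        have e3 : Aa c (m+3) + Bb c (m+3) = S (m+3) := rfl
        rw [← e3]; linear_combination hrA2 + hrB2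
      have hmul : 4 * S (m+2) ≤ (c (m+2) : ℤ) * S (m+2) :=
        mul_le_mul_of_nonneg_right hR4 (by linarith)
      exact ⟨by linarith, fun h => by omega⟩
    · have h3 : m + 3 = nm + 1 := by omega
      have hm2nm : m + 2 = nm := by omega
      have hAm2' : Aa c (m+2) = 0 := by rw [hm2nm, hAnm]
      have hBm2' : Bb c (m+2) = 1 := by rw [hm2nm, hBnm]
      have hA3 : Aa c (m+3) = -1 := by rw [h3, hAn]
      have hB3 : Bb c (m+3) = 0 := by rw [h3, hBn]
      rw [hA3, hAm2'] at hrA2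
      rw [hB3, hBm2'] at hrB2
      have hSm2 : S (m+2) = 1 := by rw [← eSm2, hAm2', hBm2']; ring
      have hSmv : S m = (c (m+2) : ℤ) := by
        rw [← eSm]
        have hAm1 : Aa c (m+1) = 1 := by linarith
        have hBm1 : Bb c (m+1) = (c (m+2) : ℤ) := by linarith
        have hx : Aa c m + Bb c m
            = Aa c (m+1) + Bb c (m+1) - (Aa c (m+2) + Bb c (m+2)) := by
          linarith
        rw [hx, hAm1, hBm1, hAm2', hBm2']; ring
      exact ⟨by linarith, fun _ => ⟨hSm2, by linarith⟩⟩
  -- left side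
  rcases Nat.eq_zero_or_pos m with hm0 | hmpos
  · -- m = 0 : S m = 1 and S (m+2) = c 0 ≥ 4, contradicting S(m+2) ≤ S m
    subst hm0
    simp only [Nat.zero_add] at hright hNpq hL4
    have hS0 : S 0 = 1 := by rw [← eSm, Aa0, Bb0]; ring
    have hq : S 2 = (c 0 : ℤ) := by rw [hS1] at hNpq; linarith
    linarith [hright.1]
  obtain ⟨t, rfl⟩ : ∃ t, m = t + 1 := ⟨m - 1, by omega⟩
  have hrAL : Aa c (t+2) = (c (t+1) : ℤ) * Aa c (t+1) - Aa c t := rec2A c t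
  have hrBL : Bb c (t+2) = (c (t+1) : ℤ) * Bb c (t+1) - Bb c t := rec2B c t
  obtain ⟨hAt, hBt⟩ := hA t (by omega)
  have hSt_le := hmax' t (by omega)
  have hSt_pos := hSpos t (by omega)
  have eSt : Aa c t + Bb c t = S t := rfl
  -- normalize indices
  have i1 : t + 1 + 1 = t + 2 := by omega
  have i2 : t + 1 + 2 = t + 3 := by omega
  have i3 : t + 1 + 3 = t + 4 := by omega
  simp only [i1, i2, i3] at hAsum hBsum hNpq hSm2_le hSm2_pos hAm2 hBm2 hcross hrA2 hrB2 hright hR4 hL4 hSt_le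
  have eS2 : Aa c (t+2) + Bb c (t+2) = S (t+2) := rfl
  have eS3 : Aa c (t+3) + Bb c (t+3) = S (t+3) := rfl
  -- S t + S (t+2) = c(t+1) * S(t+1)
  have hsumL : S t + S (t+2) = (c (t+1) : ℤ) * S (t+1) := by
    rw [← eSt, ← eSm, ← eS2]; linear_combination hrAL + hrBL
  have hmulL : 4 * S (t+1) ≤ (c (t+1) : ℤ) * S (t+1) :=
    mul_le_mul_of_nonneg_right hL4 (by linarith)
  -- p ≤ q
  have hpq : S (t+1) ≤ S (t+3) := by linarith [hright.1]
  have hqp : S (t+3) ≤ S (t+1) := hright.1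
  have hpq' : S (t+1) = S (t+3) := le_antisymm hpq hqp
  -- rule out right-edge case
  rcases Nat.lt_or_ge (t+4) (nm+1) with hlt4 | hge4
  · -- generic case: determinant trick forces p = q = 1
    have hcross' : Aa c (t+1) * Bb c (t+3) - Bb c (t+1) * Aa c (t+3) = 1 := by
      rw [hAsum, hBsum] at hcross; linear_combination hcross
    have hdet : S (t+1) * (Bb c (t+3) - Bb c (t+1)) = 1 := by
      have e2 : Aa c (t+3) + Bb c (t+3) = S (t+1) := by rw [eS3, ← hpq']
      linear_combination hcross' - Bb c (t+3) * eSm + Bb c (t+1) * e2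
    have hdvd : S (t+1) ∣ 1 := ⟨_, hdet.symm⟩
    have hle1 := Int.le_of_dvd one_pos hdvd
    have hp1 : S (t+1) = 1 := by omega
    have hq1 : S (t+3) = 1 := by rw [← hpq', hp1]
    rw [hp1, one_mul] at hdet
    have hp1' : Aa c (t+1) + Bb c (t+1) = 1 := by rw [eSm, hp1]
    have hq1' : Aa c (t+3) + Bb c (t+3) = 1 := by rw [eS3, hq1]
    have hBm0 : Bb c (t+1) = 0 := by omega
    have hBm21 : Bb c (t+3) = 1 := by omega
    -- then Bb c t = c(t+1) * 0 - Bb c (t+2) = -1 < 0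
    have hBt2 : Bb c (t+2) = 1 := by rw [hBsum, hBm0, hBm21]; norm_num
    rw [hBm0, hBt2] at hrBL
    simp at hrBL
    omega
  · -- right edge: q = 1 and p ≥ 4, contradicting p = q
    have h4 : t + 4 = nm + 1 := by omega
    obtain ⟨hq1, hp4⟩ := hright.2 h4
    omega
end

section
/- Let X be a finite indecomposable quandle, G_X its enveloping group, and π : G_X → Ḡ_X the projection onto the finite enveloping group. Then (1) for every u ∈ G_X, the restriction of π to the conjugacy class of u in G_X is injective (hence a quandle isomorphism onto its image), and (2) the canonical map ∂ : X → G_X is injective if and only if π ∘ ∂ : X → Ḡ_X is injective. -/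
/-!
The enveloping group `G_X` acts on `X` through `Inn(X)`, and `x_{g·i} = g x_i g⁻¹`. Hence
`z_i = x_i ^ |φᵢ|` commutes with every generator and is central, and `z_{g·i} = g z_i g⁻¹ = z_i`;
for indecomposable `X` all the `z_i` therefore coincide with one central `z`, and the kernel `K` of
`π` lies in `⟨z⟩`. The degree map `G_X → ℤ`, `x_i ↦ 1`, sends `z^m` to `m |φᵢ| ≠ 0` for `m ≠ 0`,
so it is injective on `K`. Being constant on conjugacy classes, it then forces `π` to be injective
on each of them. Finally all `x_i` are conjugate in `G_X`, which gives (2).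
-/

open Quandles

/-- A quandle is indecomposable if its inner group acts transitively. -/
def QuandleIndecomposable (X : Type) [Rack X] : Prop :=
  ∀ x y : X, ∃ f ∈ quandleInn X, f x = y

/-- The kernel of the projection from the enveloping group of a quandle to its finite
enveloping group: the normal closure of the set of elements `x_i ^ |φᵢ|`. -/
def envelKer (X : Type) [Quandle X] : Subgroup (Rack.EnvelGroup X) :=
  Subgroup.normalClosure
    {w | ∃ i : X, w = (Rack.toEnvelGroup X i : Rack.EnvelGroup X) ^ orderOf (Rack.act' i)}

instance (X : Type) [Quandle X] : (envelKer X).Normal :=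
  Subgroup.normalClosure_normal

namespace Rack

variable {R : Type*} [Rack R]

theorem closure_range_toEnvelGroup :
    Subgroup.closure (Set.range fun x : R => (toEnvelGroup R x : EnvelGroup R)) = ⊤ := by
  refine eq_top_iff.2 fun g _ => Quotient.inductionOn g fun a => ?_
  induction a with
  | unit => exact Subgroup.one_mem _
  | incl x => exact Subgroup.subset_closure ⟨x, rfl⟩
  | mul a b ha hb => exact Subgroup.mul_mem _ ha hb
  | inv a ha => exact Subgroup.inv_mem _ ha

theorem envelAction_toEnvelGroup (x : R) : envelAction (toEnvelGroup R x) = act' x :=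
  rfl

theorem toEnvelGroup_envelAction (g : EnvelGroup R) (x : R) :
    (toEnvelGroup R (envelAction g x) : EnvelGroup R) = g * toEnvelGroup R x * g⁻¹ := by
  have hg : g ∈ Subgroup.closure (Set.range fun x : R => (toEnvelGroup R x : EnvelGroup R)) := by
    rw [closure_range_toEnvelGroup]; trivial
  revert x
  induction hg using Subgroup.closure_induction with
  | mem _ hy =>
    obtain ⟨y, rfl⟩ := hy
    intro x
    rw [envelAction_prop, (toEnvelGroup R).map_act, Quandle.conj_act_eq_conj]
  | one => simp
  | mul g h _ _ ihg ihh =>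
    intro x
    rw [map_mul, Equiv.Perm.mul_apply, ihg, ihh]
    group
  | inv g _ ih =>
    intro x
    have h := ih (envelAction g⁻¹ x)
    rw [← Equiv.Perm.mul_apply, ← map_mul, mul_inv_cancel, map_one, Equiv.Perm.one_apply] at h
    rw [h]
    group

theorem isConj_toEnvelGroup_envelAction (g : EnvelGroup R) (x : R) :
    IsConj (toEnvelGroup R x : EnvelGroup R) (toEnvelGroup R (envelAction g x)) :=
  isConj_iff.2 ⟨g, (toEnvelGroup_envelAction g x).symm⟩

theorem act'_envelAction (g : EnvelGroup R) (x : R) :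
    act' (envelAction g x) = envelAction g * act' x * (envelAction g)⁻¹ := by
  simpa only [map_mul, map_inv, envelAction_toEnvelGroup] using
    congrArg envelAction (toEnvelGroup_envelAction g x)

theorem orderOf_act'_envelAction (g : EnvelGroup R) (x : R) :
    orderOf (act' (envelAction g x)) = orderOf (act' x) := by
  rw [act'_envelAction, ← MulAut.conj_apply, MulEquiv.orderOf_eq]

theorem toEnvelGroup_pow_orderOf_mem_center (x : R) :
    (toEnvelGroup R x : EnvelGroup R) ^ orderOf (act' x) ∈ Subgroup.center (EnvelGroup R) := by
  rw [← Subgroup.centralizer_univ, ← Subgroup.coe_top, ← closure_range_toEnvelGroup,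
    Subgroup.centralizer_closure, Subgroup.mem_centralizer_iff]
  rintro _ ⟨y, rfl⟩
  have h := toEnvelGroup_envelAction ((toEnvelGroup R x : EnvelGroup R) ^ orderOf (act' x)) y
  rw [map_pow, envelAction_toEnvelGroup, pow_orderOf_eq_one, Equiv.Perm.one_apply] at h
  rw [← mul_inv_eq_iff_eq_mul.1 h.symm]

theorem toEnvelGroup_envelAction_pow_orderOf (g : EnvelGroup R) (x : R) :
    (toEnvelGroup R (envelAction g x) : EnvelGroup R) ^ orderOf (act' (envelAction g x)) =
      (toEnvelGroup R x : EnvelGroup R) ^ orderOf (act' x) := by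
  rw [orderOf_act'_envelAction, toEnvelGroup_envelAction, conj_pow,
    Subgroup.mem_center_iff.1 (toEnvelGroup_pow_orderOf_mem_center x) g, mul_inv_cancel_right]

theorem quandleInn_le_range_envelAction {X : Type} [Rack X] :
    quandleInn X ≤ (envelAction : EnvelGroup X →* X ≃ X).range :=
  Subgroup.closure_le _ |>.2 <| by
    rintro _ ⟨x, rfl⟩
    exact ⟨toEnvelGroup X x, envelAction_toEnvelGroup x⟩

def envelDegree : EnvelGroup R →* Multiplicative ℤ :=
  toEnvelGroup.map ⟨fun _ => Multiplicative.ofAdd 1, by simp⟩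

theorem envelDegree_toEnvelGroup (x : R) :
    envelDegree (toEnvelGroup R x : EnvelGroup R) = Multiplicative.ofAdd 1 :=
  rfl

end Rack

theorem Subgroup.normal_zpowers_of_mem_center {G : Type*} [Group G] {z : G}
    (hz : z ∈ Subgroup.center G) : (Subgroup.zpowers z).Normal :=
  ⟨fun n hn g => by
    rw [Subgroup.mem_center_iff.1 (Subgroup.zpowers_le.2 hz hn) g, mul_inv_cancel_right]
    exact hn⟩

/-- Two conjugates of `u` have the same image under `f`, so if they differ by `k ∈ N` then
`k ∈ N ⊓ ker f = ⊥`. -/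
theorem QuotientGroup.injOn_mk'_setOf_isConj {G A : Type*} [Group G] [CommGroup A]
    {N : Subgroup G} [N.Normal] (f : G →* A) (hN : Disjoint N f.ker) (u : G) :
    Set.InjOn (QuotientGroup.mk' N) {v | IsConj u v} := by
  intro v hv w hw hvw
  obtain ⟨k, hk, rfl⟩ := (QuotientGroup.mk'_eq_mk' N).1 hvw
  have hfv : f u = f v := isConj_iff_eq.1 (f.map_isConj hv)
  have hfw : f u = f v * f k := by rw [← map_mul]; exact isConj_iff_eq.1 (f.map_isConj hw)
  have hfk : f k = 1 := left_eq_mul.1 (hfv ▸ hfw)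
  rw [Subgroup.disjoint_def.1 hN hk hfk, mul_one]

section envelKer

open Rack

variable {X : Type} [Quandle X]

theorem envelKer_le_zpowers (hind : QuandleIndecomposable X) (x : X) :
    envelKer X ≤ Subgroup.zpowers ((toEnvelGroup X x : EnvelGroup X) ^ orderOf (act' x)) := by
  have := Subgroup.normal_zpowers_of_mem_center (toEnvelGroup_pow_orderOf_mem_center x)
  refine Subgroup.normalClosure_le_normal ?_
  rintro _ ⟨i, rfl⟩
  obtain ⟨f, hf, rfl⟩ := hind x i
  obtain ⟨g, rfl⟩ := quandleInn_le_range_envelAction hf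
  rw [toEnvelGroup_envelAction_pow_orderOf]
  exact Subgroup.mem_zpowers _

theorem disjoint_envelKer_ker_envelDegree [Finite X] (hind : QuandleIndecomposable X) :
    Disjoint (envelKer X) (envelDegree : EnvelGroup X →* Multiplicative ℤ).ker := by
  rcases isEmpty_or_nonempty X with hX | ⟨⟨x⟩⟩
  · rw [envelKer, Subgroup.normalClosure_eq_bot_iff.2 (by rintro _ ⟨i, -⟩; exact isEmptyElim i)]
    exact disjoint_bot_left
  refine Subgroup.disjoint_def.2 fun hk hdeg => ?_
  obtain ⟨m, rfl⟩ := envelKer_le_zpowers hind x hk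
  dsimp only at hdeg ⊢
  rw [MonoidHom.mem_ker, map_zpow, map_pow, envelDegree_toEnvelGroup] at hdeg
  have hm : m * orderOf (act' x) = 0 := by
    simpa [mul_comm] using congrArg Multiplicative.toAdd hdeg
  rw [(mul_eq_zero.1 hm).resolve_right (by exact_mod_cast (orderOf_pos _).ne'), zpow_zero]

end envelKer

theorem stmt12 (X : Type) [Quandle X] [Finite X] (hind : QuandleIndecomposable X) :
    (∀ u : Rack.EnvelGroup X,
      Set.InjOn (QuotientGroup.mk' (envelKer X)) {v : Rack.EnvelGroup X | IsConj u v}) ∧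
    (Function.Injective (fun i : X => (Rack.toEnvelGroup X i : Rack.EnvelGroup X)) ↔
      Function.Injective
        (fun i : X => QuotientGroup.mk' (envelKer X) (Rack.toEnvelGroup X i))) := by
  have hconj := QuotientGroup.injOn_mk'_setOf_isConj Rack.envelDegree
    (disjoint_envelKer_ker_envelDegree hind)
  refine ⟨hconj, fun h i j hij => ?_, fun h => h.of_comp⟩
  obtain ⟨f, hf, rfl⟩ := hind i j
  obtain ⟨g, rfl⟩ := Rack.quandleInn_le_range_envelAction hf
  exact h (hconj _ (IsConj.refl _) (Rack.isConj_toEnvelGroup_envelAction g i) hij)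
end

section
/- Let G be a group and g, h ∈ G, and write x ▷ y = xyx⁻¹ for conjugation. Let x, y ∈ h^G with x ▷ y = y. Assume that y ▷ z ≠ z for all z ∈ h^G \ {x, y}, and that there exist r, s ∈ g^G with r ≠ s such that x ▷ r = s, x ▷ s = r, and x ▷ z = z for all z ∈ g^G \ {r, s}. Then y ▷ r = s, y ▷ s = r, and y ▷ z = z for all z ∈ g^G \ {r, s}. -/
theorem stmt17 (G : Type) [Group G] (g h : G) (x y : G)
    (hx : IsConj h x) (hy : IsConj h y)
    (hxy : x * y * x⁻¹ = y)
    (hyz : ∀ z : G, IsConj h z → z ≠ x → z ≠ y → y * z * y⁻¹ ≠ z)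
    (r s : G) (hr : IsConj g r) (hs : IsConj g s) (hrs : r ≠ s)
    (hxr : x * r * x⁻¹ = s) (hxs : x * s * x⁻¹ = r)
    (hxfix : ∀ z : G, IsConj g z → z ≠ r → z ≠ s → x * z * x⁻¹ = z) :
    y * r * y⁻¹ = s ∧ y * s * y⁻¹ = r ∧
    ∀ z : G, IsConj g z → z ≠ r → z ≠ s → y * z * y⁻¹ = z := by
  have hconj : ∀ (t w c : G), IsConj t w → IsConj t (c * w * c⁻¹) :=
    fun t w c hw => hw.trans (isConj_iff.2 ⟨c, rfl⟩)
  have flip : ∀ a b c : G, a⁻¹ * b * a = c → a * c * a⁻¹ = b := by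
    intro a b c hc; rw [← hc]; group
  have hcomm : x * y = y * x := by
    conv_rhs => rw [← hxy]
    group
  have hyx : y * x * y⁻¹ = x := by
    rw [← hcomm]; group
  -- Step 1: y * r * y⁻¹ = s
  have hyr : y * r * y⁻¹ = s := by
    have hp : IsConj g (y * r * y⁻¹) := hconj g r y hr
    have hkey : x * (y * r * y⁻¹) * x⁻¹ = y * s * y⁻¹ := by
      calc x * (y * r * y⁻¹) * x⁻¹ = (x * y) * r * (x * y)⁻¹ := by group
        _ = (y * x) * r * (y * x)⁻¹ := by rw [hcomm]
        _ = y * (x * r * x⁻¹) * y⁻¹ := by group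
        _ = y * s * y⁻¹ := by rw [hxr]
    by_cases hps : y * r * y⁻¹ = s
    · exact hps
    by_cases hpr : y * r * y⁻¹ = r
    · exfalso
      have hw : IsConj h (r * x * r⁻¹) := hconj h x r hx
      have hfix : y * (r * x * r⁻¹) * y⁻¹ = r * x * r⁻¹ := by
        calc y * (r * x * r⁻¹) * y⁻¹
            = (y * r * y⁻¹) * (y * x * y⁻¹) * (y * r * y⁻¹)⁻¹ := by group
          _ = r * x * r⁻¹ := by rw [hpr, hyx]
      by_cases hwx : r * x * r⁻¹ = x
      · have h1 : x * r * x⁻¹ = r := by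
          have h0 : r * x = x * r := by
            conv_rhs => rw [← hwx]
            group
          rw [← h0]; group
        exact hrs (h1.symm.trans hxr)
      by_cases hwy : r * x * r⁻¹ = y
      · have h2 : y * r * y⁻¹ = r * s * r⁻¹ := by
          rw [← hwy, ← hxr]; group
        have h3 : r * s * r⁻¹ = r := h2.symm.trans hpr
        have h4 : s = r := by
          calc s = r⁻¹ * (r * s * r⁻¹) * r := by group
            _ = r⁻¹ * r * r := by rw [h3]
            _ = r := by group
        exact hrs h4.symm
      · exact (hyz _ hw hwx hwy) hfix
    · exfalso
      have h4 : y * s * y⁻¹ = y * r * y⁻¹ := hkey.symm.trans (hxfix _ hp hpr hps)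
      apply hrs
      calc r = y⁻¹ * (y * r * y⁻¹) * y := by group
        _ = y⁻¹ * (y * s * y⁻¹) * y := by rw [h4]
        _ = s := by group
  -- Step 2: y * s * y⁻¹ = r
  have hys : y * s * y⁻¹ = r := by
    have hq : IsConj g (y * s * y⁻¹) := hconj g s y hs
    have hkey2 : x * (y * s * y⁻¹) * x⁻¹ = s := by
      calc x * (y * s * y⁻¹) * x⁻¹ = (x * y) * s * (x * y)⁻¹ := by group
        _ = (y * x) * s * (y * x)⁻¹ := by rw [hcomm]
        _ = y * (x * s * x⁻¹) * y⁻¹ := by group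
        _ = y * r * y⁻¹ := by rw [hxs]
        _ = s := hyr
    by_cases hqr : y * s * y⁻¹ = r
    · exact hqr
    by_cases hqs : y * s * y⁻¹ = s
    · exfalso
      rw [hqs] at hkey2
      exact hrs (hxs.symm.trans hkey2)
    · exact absurd ((hxfix _ hq hqr hqs).symm.trans hkey2) hqs
  refine ⟨hyr, hys, ?_⟩
  -- Step 3: the fixed part
  obtain ⟨a, ha⟩ := isConj_iff.1 (hx.symm.trans hy)
  have hra : a⁻¹ * r * a = r ∨ a⁻¹ * r * a = s := by
    by_contra hcon
    push_neg at hcon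
    have h1 : IsConj g (a⁻¹ * r * a) := by
      have := hconj g r a⁻¹ hr; rwa [inv_inv] at this
    have h2 := hxfix _ h1 hcon.1 hcon.2
    have h3 : y * r * y⁻¹ = r := by
      rw [← ha]
      calc (a * x * a⁻¹) * r * (a * x * a⁻¹)⁻¹
          = a * (x * (a⁻¹ * r * a) * x⁻¹) * a⁻¹ := by group
        _ = a * (a⁻¹ * r * a) * a⁻¹ := by rw [h2]
        _ = r := by group
    exact hrs (h3.symm.trans hyr)
  have hsa : a⁻¹ * s * a = r ∨ a⁻¹ * s * a = s := by
    by_contra hcon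
    push_neg at hcon
    have h1 : IsConj g (a⁻¹ * s * a) := by
      have := hconj g s a⁻¹ hs; rwa [inv_inv] at this
    have h2 := hxfix _ h1 hcon.1 hcon.2
    have h3 : y * s * y⁻¹ = s := by
      rw [← ha]
      calc (a * x * a⁻¹) * s * (a * x * a⁻¹)⁻¹
          = a * (x * (a⁻¹ * s * a) * x⁻¹) * a⁻¹ := by group
        _ = a * (a⁻¹ * s * a) * a⁻¹ := by rw [h2]
        _ = s := by group
    exact hrs (hys.symm.trans h3)
  intro z hz hzr hzs
  have hz1 : IsConj g (a⁻¹ * z * a) := by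
    have := hconj g z a⁻¹ hz; rwa [inv_inv] at this
  by_cases h5 : a⁻¹ * z * a = r
  · exfalso
    have hz2 : z = a * r * a⁻¹ := (flip a z r h5).symm
    rcases hra with h6 | h6
    · exact hzr (hz2.trans (flip a r r h6))
    · rcases hsa with h8 | h8
      · exact hzs (hz2.trans (flip a s r h8))
      · apply hrs
        calc r = a * (a⁻¹ * r * a) * a⁻¹ := by group
          _ = a * (a⁻¹ * s * a) * a⁻¹ := by rw [h6, h8]
          _ = s := by group
  by_cases h5' : a⁻¹ * z * a = s
  · exfalso
    have hz2 : z = a * s * a⁻¹ := (flip a z s h5').symm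
    rcases hsa with h6 | h6
    · rcases hra with h7 | h7
      · apply hrs
        calc r = a * (a⁻¹ * r * a) * a⁻¹ := by group
          _ = a * (a⁻¹ * s * a) * a⁻¹ := by rw [h7, h6]
          _ = s := by group
      · exact hzr (hz2.trans (flip a r s h7))
    · exact hzs (hz2.trans (flip a s s h6))
  · have h2 := hxfix _ hz1 h5 h5'
    rw [← ha]
    calc (a * x * a⁻¹) * z * (a * x * a⁻¹)⁻¹
        = a * (x * (a⁻¹ * z * a) * x⁻¹) * a⁻¹ := by group
      _ = a * (a⁻¹ * z * a) * a⁻¹ := by rw [h2]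
      _ = z := by group
end

section
/- The commutator subgroup [T,T] of the group T is isomorphic to the quaternion group Q₈ of order eight. -/
/-!
In `G = PresentedGroup TRels` write `u i = x i * (x 3)⁻¹`. Conjugation by `x 3` permutes
`u 0 → u 1 → u 2 → u 0`, and the relations for `x i * x 3 * (x i)⁻¹` become
`u 0 * (u 1)⁻¹ = u 2`, `u 1 * (u 2)⁻¹ = u 0`, `u 2 * (u 0)⁻¹ = u 1`, which force `u 0, u 1` to
satisfy the defining relations of `Q₈`. So there is a homomorphism `Q₈ → G` onto
`N = ⟨u 0, u 1⟩`. Each `u i` is a commutator `⁅x j, x 3⁆`, and `N` is normal with `G ⧸ N`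
generated by the image of `x 3`, so `N = [G, G]`. Injectivity comes from the representation
`x i ↦ (q i, 1)` of `G` in `Q₈ ⋊ ℤ`, where `q i ∈ Q₈` is the element playing the role of `u i`
and `ℤ` acts by the automorphism of order three rotating `q 0 → q 1 → q 2 → q 0`. Finally the
factor `⟨z⟩` of `T` is central and contributes nothing to `[T, T]`.
-/

section ZModPow

variable {M : Type*} [Group M] {m : ℕ} [NeZero m] {a x : M}

theorem pow_val_add_of_pow_eq_one (ha : a ^ m = 1) (i j : ZMod m) :
    a ^ (i + j).val = a ^ i.val * a ^ j.val := by
  rw [ZMod.val_add, ← pow_eq_pow_mod _ ha, pow_add]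

theorem pow_val_neg_of_pow_eq_one (ha : a ^ m = 1) (i : ZMod m) :
    a ^ (-i).val = (a ^ i.val)⁻¹ :=
  eq_inv_of_mul_eq_one_left <| by
    rw [← pow_val_add_of_pow_eq_one ha, neg_add_cancel, ZMod.val_zero, pow_zero]

theorem pow_val_mul_of_mul_eq_mul_inv (ha : a ^ m = 1) (hax : a * x = x * a⁻¹) (i : ZMod m) :
    a ^ i.val * x = x * a ^ (-i).val := by
  rw [pow_val_neg_of_pow_eq_one ha, ← inv_pow]
  exact (SemiconjBy.pow_right hax.symm i.val).symm

end ZModPow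

namespace QuaternionGroup

variable {n : ℕ} [NeZero n] {M : Type*} [Group M]

theorem closure_a_one_xa_zero :
    Subgroup.closure {a 1, xa 0} = (⊤ : Subgroup (QuaternionGroup n)) := by
  have ha (i : ZMod (2 * n)) : a i ∈ Subgroup.closure {a 1, xa 0} := by
    rw [← ZMod.natCast_zmod_val i, ← a_one_pow]
    exact pow_mem (Subgroup.subset_closure (by simp)) _
  refine eq_top_iff.2 fun g _ => ?_
  rcases g with i | i
  · exact ha i
  · rw [← zero_add i, ← xa_mul_a]
    exact mul_mem (Subgroup.subset_closure (by simp)) (ha i)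

theorem hom_ext {f g : QuaternionGroup n →* M} (h₁ : f (a 1) = g (a 1))
    (h₂ : f (xa 0) = g (xa 0)) : f = g :=
  MonoidHom.eq_of_eqOn_dense closure_a_one_xa_zero (by simp [Set.EqOn, h₁, h₂])

def lift (a₀ x : M) (ha : a₀ ^ (2 * n) = 1) (hx : x ^ 2 = a₀ ^ n) (hax : a₀ * x = x * a₀⁻¹) :
    QuaternionGroup n →* M where
  toFun
    | a i => a₀ ^ i.val
    | xa i => x * a₀ ^ i.val
  map_one' := by
    rw [one_def]
    show a₀ ^ (0 : ZMod (2 * n)).val = 1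
    rw [ZMod.val_zero, pow_zero]
  map_mul' := by
    have hn : (n : ZMod (2 * n)).val = n := by
      rw [ZMod.val_natCast, Nat.mod_eq_of_lt (by have := NeZero.pos n; omega)]
    rintro (i | i) (j | j)
    · simp only [a_mul_a, pow_val_add_of_pow_eq_one ha]
    · simp only [a_mul_xa]
      rw [← mul_assoc, pow_val_mul_of_mul_eq_mul_inv ha hax, mul_assoc,
        ← pow_val_add_of_pow_eq_one ha, neg_add_eq_sub]
    · simp only [xa_mul_a, pow_val_add_of_pow_eq_one ha, mul_assoc]
    · simp only [xa_mul_xa]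
      rw [mul_assoc, ← mul_assoc (a₀ ^ i.val), pow_val_mul_of_mul_eq_mul_inv ha hax, ← mul_assoc,
        ← mul_assoc, ← sq, hx, mul_assoc, ← pow_val_add_of_pow_eq_one ha, add_sub_assoc,
        pow_val_add_of_pow_eq_one ha, hn, neg_add_eq_sub]

end QuaternionGroup

section MulInvCycle

variable {G : Type*} [Group G] {i j k : G}

theorem sq_eq_sq_of_mul_inv_cycle (hk : i * j⁻¹ = k) (hi : j * k⁻¹ = i) : j ^ 2 = i ^ 2 := by
  subst hk
  calc j ^ 2 = j * (i * j⁻¹)⁻¹ * i := by rw [sq]; group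
    _ = i ^ 2 := by rw [hi, sq]

theorem mul_mul_inv_eq_inv_of_mul_inv_cycle (hk : i * j⁻¹ = k) (hj : k * i⁻¹ = j) :
    i * j * i⁻¹ = j⁻¹ := by
  calc i * j * i⁻¹ = (i * j⁻¹ * i⁻¹)⁻¹ := by group
    _ = j⁻¹ := by rw [hk, hj]

theorem mul_eq_mul_inv_of_mul_inv_cycle (hk : i * j⁻¹ = k) (hi : j * k⁻¹ = i)
    (hj : k * i⁻¹ = j) : i * j = j * i⁻¹ := by
  calc i * j = (i * j * i⁻¹) * i := by group
    _ = j * (j ^ 2)⁻¹ * i := by rw [mul_mul_inv_eq_inv_of_mul_inv_cycle hk hj, sq]; group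
    _ = j * i⁻¹ := by rw [sq_eq_sq_of_mul_inv_cycle hk hi, sq]; group

theorem pow_four_eq_one_of_mul_inv_cycle (hk : i * j⁻¹ = k) (hi : j * k⁻¹ = i)
    (hj : k * i⁻¹ = j) : i ^ 4 = 1 := by
  calc i ^ 4 = i * i ^ 2 * i⁻¹ * i ^ 2 := by group
    _ = (i * j * i⁻¹) * (i * j * i⁻¹) * j ^ 2 := by
      rw [← sq_eq_sq_of_mul_inv_cycle hk hi, sq]; group
    _ = 1 := by rw [mul_mul_inv_eq_inv_of_mul_inv_cycle hk hj]; group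

end MulInvCycle

theorem SemidirectProduct.inl_mul_inr_conj {N G : Type*} [Group N] [Group G]
    {φ : G →* MulAut N} (m n : N) (g : G) :
    (inl m * inr g) * (inl n * inr g) * (inl m * inr g)⁻¹ =
      (inl (m * φ g (n * m⁻¹)) * inr g : N ⋊[φ] G) := by
  calc (inl m * inr g) * (inl n * inr g) * (inl m * inr g)⁻¹
      = (inl m * (inr g * inl (n * m⁻¹) * inr g⁻¹) * inr g : N ⋊[φ] G) := by
        simp only [map_mul, map_inv]; group
    _ = _ := by rw [← inl_aut, ← map_mul]

def commutatorProdEquiv (A B : Type*) [CommGroup A] [Group B] :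
    commutator (A × B) ≃* commutator B :=
  (MulEquiv.subgroupCongr (by
    rw [commutator_def, ← Subgroup.top_prod_top, Subgroup.commutator_prod_prod, ← commutator_def,
      ← commutator_def, commutator_eq_bot])).trans
    (((⊥ : Subgroup A).prodEquiv (commutator B)).trans MulEquiv.uniqueProd)

namespace TRels

open QuaternionGroup SemidirectProduct
open scoped commutatorElement

local notation "Γ" => PresentedGroup TRels

def x (i : Fin 4) : Γ := PresentedGroup.of i

theorem x_mul_x_mul_inv (i j : Fin 4) : x i * x j * (x i)⁻¹ = x (phiA4 i j) :=
  mul_inv_eq_one.mp (PresentedGroup.one_of_mem ⟨i, j, rfl⟩)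

def u (i : Fin 4) : Γ := x i * (x 3)⁻¹

theorem commutatorElement_x_x_three (i : Fin 4) : ⁅x i, x 3⁆ = u (phiA4 i 3) := by
  rw [commutatorElement_def, x_mul_x_mul_inv, u]

theorem x_three_mul_u_mul_inv (i : Fin 4) : x 3 * u i * (x 3)⁻¹ = u (phiA4 3 i) := by
  rw [u, u, ← x_mul_x_mul_inv]
  group

theorem u_mul_inv_u (i : Fin 4) : u i * (u (phiA4 3 i))⁻¹ = u (phiA4 i 3) := by
  rw [← x_three_mul_u_mul_inv, ← commutatorElement_x_x_three, commutatorElement_def, u]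
  group

def ofQuaternion : QuaternionGroup 2 →* Γ :=
  lift (u 0) (u 1)
    (pow_four_eq_one_of_mul_inv_cycle (u_mul_inv_u 0) (u_mul_inv_u 1) (u_mul_inv_u 2))
    (sq_eq_sq_of_mul_inv_cycle (u_mul_inv_u 0) (u_mul_inv_u 1))
    (mul_eq_mul_inv_of_mul_inv_cycle (u_mul_inv_u 0) (u_mul_inv_u 1) (u_mul_inv_u 2))

def q : Fin 4 → QuaternionGroup 2 := ![a 1, xa 0, a 1 * (xa 0)⁻¹, 1]

theorem ofQuaternion_q (i : Fin 4) : ofQuaternion (q i) = u i := by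
  fin_cases i
  · exact pow_one _
  · exact mul_one _
  · show ofQuaternion (a 1 * (xa 0)⁻¹) = u 2
    rw [map_mul, map_inv]
    exact u_mul_inv_u 0
  · exact (map_one _).trans (mul_inv_cancel _).symm

theorem x_eq_ofQuaternion_q_mul (i : Fin 4) : x i = ofQuaternion (q i) * x 3 := by
  rw [ofQuaternion_q, u, inv_mul_cancel_right]

-- `σ` has order three, so `σ₀ ∘ σ₀` inverts it.
def σ : MulAut (QuaternionGroup 2) :=
  let σ₀ := lift (xa 0) (a 1 * (xa 0)⁻¹) (by decide) (by decide) (by decide)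
  σ₀.toMulEquiv (σ₀.comp σ₀) (MonoidHom.ext <| by decide +revert)
    (MonoidHom.ext <| by decide +revert)

theorem σ_q (i : Fin 4) : σ (q i) = q (phiA4 3 i) := by
  revert i; decide

theorem q_mul_σ (i j : Fin 4) : q i * σ (q j * (q i)⁻¹) = q (phiA4 i j) := by
  revert i j; decide

theorem conj_x_three_comp_ofQuaternion :
    (MulAut.conj (x 3) : Γ →* Γ).comp ofQuaternion = ofQuaternion.comp σ := by
  have h (i : Fin 4) : x 3 * ofQuaternion (q i) * (x 3)⁻¹ = ofQuaternion (σ (q i)) := by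
    rw [σ_q, ofQuaternion_q, ofQuaternion_q, x_three_mul_u_mul_inv]
  exact hom_ext (h 0) (h 1)

theorem range_ofQuaternion_normal : ofQuaternion.range.Normal := by
  have hx₃ : x 3 ∈ Subgroup.normalizer (ofQuaternion.range : Set Γ) := by
    rw [Subgroup.mem_normalizer_iff_map_conj_eq, MonoidHom.map_range,
      conj_x_three_comp_ofQuaternion, MonoidHom.range_comp, σ.range_eq_top,
      ← MonoidHom.range_eq_map]
  refine Subgroup.normalizer_eq_top_iff.mp (eq_top_iff.2 ?_)
  rw [← PresentedGroup.closure_range_of, Subgroup.closure_le]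
  rintro _ ⟨i, rfl⟩
  rw [← x, x_eq_ofQuaternion_q_mul]
  exact mul_mem (Subgroup.le_normalizer ⟨q i, rfl⟩) hx₃

abbrev Semidirect : Type :=
  QuaternionGroup 2 ⋊[zpowersHom (MulAut (QuaternionGroup 2)) σ] Multiplicative ℤ

def toSemidirect : Γ →* Semidirect :=
  PresentedGroup.toGroup (f := fun i => inl (q i) * inr (.ofAdd 1)) <| by
    rintro _ ⟨i, j, rfl⟩
    simp only [map_mul, map_inv, FreeGroup.lift_apply_of]
    rw [mul_inv_eq_one, inl_mul_inr_conj, zpowersHom_apply, toAdd_ofAdd, zpow_one, q_mul_σ]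

theorem toSemidirect_x (i : Fin 4) : toSemidirect (x i) = inl (q i) * inr (.ofAdd 1) :=
  PresentedGroup.toGroup.of _

theorem toSemidirect_u (i : Fin 4) : toSemidirect (u i) = inl (q i) := by
  rw [u, map_mul, map_inv, toSemidirect_x, toSemidirect_x, show q 3 = 1 from rfl,
    MonoidHom.map_one, one_mul, mul_inv_cancel_right]

theorem toSemidirect_comp_ofQuaternion : toSemidirect.comp ofQuaternion = inl :=
  hom_ext ((congrArg toSemidirect (ofQuaternion_q 0)).trans (toSemidirect_u 0))
    ((congrArg toSemidirect (ofQuaternion_q 1)).trans (toSemidirect_u 1))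

theorem ofQuaternion_injective : Function.Injective ofQuaternion := by
  intro g h hgh
  apply inl_injective (φ := zpowersHom (MulAut (QuaternionGroup 2)) σ)
  rw [← toSemidirect_comp_ofQuaternion, MonoidHom.comp_apply, MonoidHom.comp_apply, hgh]

theorem commutator_le_range_ofQuaternion : commutator Γ ≤ ofQuaternion.range := by
  have := range_ofQuaternion_normal
  set π := QuotientGroup.mk' ofQuaternion.range
  have hπ : π = (zpowersHom _ (π (x 3))).comp (rightHom.comp toSemidirect) :=
    PresentedGroup.ext fun i => by
      rw [MonoidHom.comp_apply, MonoidHom.comp_apply, ← x, toSemidirect_x,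
        x_eq_ofQuaternion_q_mul, map_mul]
      simp [π]
  calc commutator Γ ≤ (rightHom.comp toSemidirect).ker := Abelianization.commutator_subset_ker _
    _ ≤ π.ker := fun g hg => by
      rw [hπ, MonoidHom.mem_ker, MonoidHom.comp_apply, MonoidHom.mem_ker.mp hg, map_one]
    _ = ofQuaternion.range := QuotientGroup.ker_mk' _

theorem range_ofQuaternion_le_commutator : ofQuaternion.range ≤ commutator Γ := by
  have hu (i : Fin 4) : u (phiA4 i 3) ∈ commutator Γ := by
    rw [← commutatorElement_x_x_three, commutator_def]
    exact Subgroup.commutator_mem_commutator (Subgroup.mem_top _) (Subgroup.mem_top _)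
  rw [MonoidHom.range_eq_map, ← closure_a_one_xa_zero, MonoidHom.map_closure, Set.image_pair,
    Subgroup.closure_le, Set.insert_subset_iff, Set.singleton_subset_iff]
  exact ⟨(ofQuaternion_q 0).symm ▸ hu 1, (ofQuaternion_q 1).symm ▸ hu 2⟩

noncomputable def commutatorEquiv : commutator Γ ≃* QuaternionGroup 2 :=
  (MulEquiv.subgroupCongr (commutator_le_range_ofQuaternion.antisymm
    range_ofQuaternion_le_commutator)).trans (MonoidHom.ofInjective ofQuaternion_injective).symm

end TRels

theorem stmt19 : Nonempty ((commutator TGroup) ≃* QuaternionGroup 2) :=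
  ⟨(commutatorProdEquiv _ _).trans TRels.commutatorEquiv⟩
end
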